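/- arXiv:2106.06276 — 14 statements merged into one kernel-verified Lean document; each statement's English description precedes it below -/
import Mathlib

section
/- Let X be a normed space and F : B_X → B_X a non-expansive bijection of the closed unit ball onto itself. Then F(0) = 0. -/
theorem fixed_zero {X : Type*} [NormedAddCommGroup X] [NormedSpace ℝ X]
    (F : X → X)
    (hbij : Set.BijOn F (Metric.closedBall (0:X) 1) (Metric.closedBall (0:X) 1))
    (hne : ∀ a ∈ Metric.closedBall (0:X) 1, ∀ b ∈ Metric.closedBall (0:X) 1,
      ‖F a - F b‖ ≤ ‖a - b‖) :
    F 0 = 0 := by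
  set y := F 0 with hy
  by_contra hy0
  have h0 : (0:X) ∈ Metric.closedBall (0:X) 1 := by simp
  have hyn : ‖y‖ ≠ 0 := by simpa using hy0
  have hynpos : 0 < ‖y‖ := lt_of_le_of_ne (norm_nonneg y) (Ne.symm hyn)
  set z : X := -(‖y‖⁻¹ • y) with hz
  have hzball : z ∈ Metric.closedBall (0:X) 1 := by
    simp only [Metric.mem_closedBall, dist_zero_right, hz, norm_neg, norm_smul,
      norm_inv, norm_norm]
    rw [inv_mul_cancel₀ hyn]
  obtain ⟨x, hx, hfx⟩ := hbij.surjOn hzball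
  have h1 : ‖F x - F 0‖ ≤ ‖x - 0‖ := hne x hx 0 h0
  rw [hfx, ← hy, sub_zero] at h1
  have hx1 : ‖x‖ ≤ 1 := by simpa using hx
  have hzy : ‖z - y‖ = 1 + ‖y‖ := by
    have : z - y = -((‖y‖⁻¹ + 1) • y) := by
      rw [hz]; rw [add_smul, one_smul]; abel
    rw [this, norm_neg, norm_smul]
    have : ‖(‖y‖⁻¹ + 1 : ℝ)‖ = ‖y‖⁻¹ + 1 := by
      rw [Real.norm_eq_abs, abs_of_pos]; positivity
    rw [this, add_mul, inv_mul_cancel₀ hyn, one_mul]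
  rw [hzy] at h1
  have : 1 + ‖y‖ ≤ 1 := h1.trans hx1
  linarith
end

section
/- Let X be a normed space and F : B_X → B_X a non-expansive bijection. If x lies on the unit sphere S_X, then F⁻¹(x) also lies on S_X. -/
theorem preimage_sphere_mem_sphere {X : Type*} [NormedAddCommGroup X] [NormedSpace ℝ X]
    (F : X → X)
    (hbij : Set.BijOn F (Metric.closedBall (0:X) 1) (Metric.closedBall (0:X) 1))
    (hne : ∀ a ∈ Metric.closedBall (0:X) 1, ∀ b ∈ Metric.closedBall (0:X) 1,
      ‖F a - F b‖ ≤ ‖a - b‖) :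
    ∀ x ∈ Metric.sphere (0:X) 1, ∀ y ∈ Metric.closedBall (0:X) 1,
      F y = x → y ∈ Metric.sphere (0:X) 1 := by
  intro x hx y hy hFy
  rw [mem_sphere_zero_iff_norm] at hx ⊢
  have hy' : ‖y‖ ≤ 1 := mem_closedBall_zero_iff.mp hy
  -- -x is in the closed ball
  have hnegx : -x ∈ Metric.closedBall (0:X) 1 := by
    rw [mem_closedBall_zero_iff, norm_neg, hx]
  obtain ⟨u, hu, hFu⟩ := hbij.surjOn hnegx
  have hu' : ‖u‖ ≤ 1 := mem_closedBall_zero_iff.mp hu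
  have h2 : ‖F u - F y‖ ≤ ‖u - y‖ := hne u hu y hy
  rw [hFu, hFy] at h2
  have : ‖-x - x‖ = 2 := by
    have : -x - x = -(2 : ℝ) • x := by module
    rw [this, norm_smul]
    simp [hx]
  rw [this] at h2
  have h3 : ‖u - y‖ ≤ ‖u‖ + ‖y‖ := norm_sub_le u y
  linarith
end

section
/- Let X be a normed space and F : B_X → B_X a non-expansive bijection. If x is an extreme point of B_X, then F⁻¹(x) is an extreme point of B_X, and moreover F⁻¹(αx) = α·F⁻¹(x) for every α ∈ [−1, 1]. -/
private lemma extreme_char {X : Type*} [NormedAddCommGroup X] [NormedSpace ℝ X]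
    {x : X} (hx : x ∈ Set.extremePoints ℝ (Metric.closedBall (0:X) 1))
    (hx1 : ‖x‖ = 1) {q : X} (hq : ‖q - x‖ + ‖q + x‖ ≤ 2) :
    ∃ β : ℝ, q = β • x ∧ ‖q - x‖ = 1 - β ∧ ‖q + x‖ = 1 + β := by
  have hxx : ‖x + x‖ = 2 := by
    have h : x + x = (2:ℝ) • x := by module
    rw [h, norm_smul, hx1]; norm_num
  have hge : 2 ≤ ‖q - x‖ + ‖q + x‖ := by
    have h := norm_sub_le (q + x) (q - x)
    have he : (q + x) - (q - x) = x + x := by abel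
    rw [he, hxx] at h
    linarith
  have hsum : ‖q - x‖ + ‖q + x‖ = 2 := le_antisymm hq hge
  rcases eq_or_lt_of_le (norm_nonneg (q - x)) with hs | hs
  · have hqx : q = x := sub_eq_zero.mp (norm_eq_zero.mp hs.symm)
    refine ⟨1, by rw [hqx, one_smul], ?_, ?_⟩
    · rw [← hs]; norm_num
    · rw [hqx, hxx]; norm_num
  rcases eq_or_lt_of_le (norm_nonneg (q + x)) with ht | ht
  · have hqx : q = -x := eq_neg_of_add_eq_zero_left (norm_eq_zero.mp ht.symm)
    refine ⟨-1, by rw [hqx, neg_one_smul], ?_, ?_⟩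
    · have : q - x = -(x + x) := by rw [hqx]; abel
      rw [this, norm_neg, hxx]; norm_num
    · rw [← ht]; norm_num
  · set s := ‖q - x‖ with hs'
    set t := ‖q + x‖ with ht'
    have hsne : s ≠ 0 := ne_of_gt hs
    have htne : t ≠ 0 := ne_of_gt ht
    set e1 : X := t⁻¹ • (q + x) with he1
    set e2 : X := s⁻¹ • (x - q) with he2
    have he1B : e1 ∈ Metric.closedBall (0:X) 1 := by
      rw [mem_closedBall_zero_iff, he1, norm_smul, norm_inv, Real.norm_eq_abs,
        abs_of_pos ht, ← ht']
      rw [inv_mul_cancel₀ htne]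
    have he2B : e2 ∈ Metric.closedBall (0:X) 1 := by
      rw [mem_closedBall_zero_iff, he2, norm_smul, norm_inv, Real.norm_eq_abs,
        abs_of_pos hs, norm_sub_rev, ← hs']
      rw [inv_mul_cancel₀ hsne]
    have hseg : x ∈ openSegment ℝ e1 e2 := by
      refine ⟨t/2, s/2, by positivity, by positivity, by linarith, ?_⟩
      rw [he1, he2, smul_smul, smul_smul]
      rw [div_mul_eq_mul_div, mul_inv_cancel₀ htne, div_mul_eq_mul_div,
        mul_inv_cancel₀ hsne]
      module
    have hE1 := hx.2 he1B he2B hseg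
    have hq' : q + x = t • x := by
      have := congrArg (fun z => t • z) hE1
      simpa [he1, smul_smul, mul_inv_cancel₀ htne] using this
    refine ⟨t - 1, ?_, by linarith, by ring⟩
    have : q = t • x - x := by rw [← hq']; abel
    rw [this, sub_smul, one_smul]

theorem preimage_extreme_point {X : Type*} [NormedAddCommGroup X] [NormedSpace ℝ X]
    (F : X → X)
    (hbij : Set.BijOn F (Metric.closedBall (0:X) 1) (Metric.closedBall (0:X) 1))
    (hne : ∀ a ∈ Metric.closedBall (0:X) 1, ∀ b ∈ Metric.closedBall (0:X) 1,
      ‖F a - F b‖ ≤ ‖a - b‖) :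
    ∀ x ∈ Set.extremePoints ℝ (Metric.closedBall (0:X) 1),
      ∀ y ∈ Metric.closedBall (0:X) 1, F y = x →
        (y ∈ Set.extremePoints ℝ (Metric.closedBall (0:X) 1) ∧
          ∀ α ∈ Set.Icc (-1:ℝ) 1, ∀ z ∈ Metric.closedBall (0:X) 1,
            F z = α • x → z = α • y) := by
  intro x hx y hy hFy
  rcases subsingleton_or_nontrivial X with hX | hX
  · constructor
    · have h : y = x := Subsingleton.elim y x
      rwa [h]
    · intro α hα z hz hFz
      exact Subsingleton.elim z (α • y)
  -- nontrivial case
  have hxB : ‖x‖ ≤ 1 := mem_closedBall_zero_iff.mp hx.1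
  have hx1 : ‖x‖ = 1 := by
    by_contra h
    have hlt : ‖x‖ < 1 := lt_of_le_of_ne hxB h
    obtain ⟨u, hu⟩ := exists_ne (0 : X)
    have hu0 : ‖u‖ ≠ 0 := norm_ne_zero_iff.mpr hu
    set e : X := (1 - ‖x‖) • (‖u‖⁻¹ • u) with he
    have hen : ‖e‖ = 1 - ‖x‖ := by
      rw [he, norm_smul, norm_smul, norm_inv, norm_norm, Real.norm_eq_abs,
        abs_of_nonneg (by linarith), inv_mul_cancel₀ hu0, mul_one]
    have he0 : e ≠ 0 := by
      intro h0; rw [h0, norm_zero] at hen; linarith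
    have h1 : x + e ∈ Metric.closedBall (0:X) 1 := by
      rw [mem_closedBall_zero_iff]
      calc ‖x + e‖ ≤ ‖x‖ + ‖e‖ := norm_add_le _ _
        _ = 1 := by rw [hen]; ring
    have h2 : x - e ∈ Metric.closedBall (0:X) 1 := by
      rw [mem_closedBall_zero_iff]
      calc ‖x - e‖ ≤ ‖x‖ + ‖e‖ := norm_sub_le _ _
        _ = 1 := by rw [hen]; ring
    have hseg : x ∈ openSegment ℝ (x + e) (x - e) :=
      ⟨1/2, 1/2, by norm_num, by norm_num, by norm_num, by module⟩
    have := hx.2 h1 h2 hseg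
    exact he0 (by simpa using congrArg (fun z => z - x) this)
  -- w := preimage of -x
  have hmx : -x ∈ Metric.closedBall (0:X) 1 := by
    rw [mem_closedBall_zero_iff, norm_neg, hx1]
  obtain ⟨w, hw, hFw⟩ := hbij.surjOn hmx
  -- the machine
  have step4 : ∀ p ∈ Metric.closedBall (0:X) 1, ‖p - y‖ + ‖p - w‖ ≤ 2 →
      ∃ β : ℝ, F p = β • x ∧ ‖p - y‖ = 1 - β ∧ ‖p - w‖ = 1 + β := by
    intro p hp hsum
    have hq1 : ‖F p - x‖ ≤ ‖p - y‖ := by rw [← hFy]; exact hne p hp y hy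
    have hq2 : ‖F p + x‖ ≤ ‖p - w‖ := by
      have h : F p + x = F p - F w := by rw [hFw]; abel
      rw [h]; exact hne p hp w hw
    obtain ⟨β, hβ, h1, h2⟩ := extreme_char hx hx1 (by linarith)
    exact ⟨β, hβ, by linarith, by linarith⟩
  have h0B : (0:X) ∈ Metric.closedBall (0:X) 1 := Metric.mem_closedBall_self (by norm_num)
  have hyn : ‖y‖ ≤ 1 := mem_closedBall_zero_iff.mp hy
  have hwn : ‖w‖ ≤ 1 := mem_closedBall_zero_iff.mp hw
  -- F 0 = 0, ‖y‖ = 1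
  obtain ⟨β₀, hF0, h01, h02⟩ := step4 0 h0B (by
    rw [zero_sub, zero_sub, norm_neg, norm_neg]; linarith)
  rw [zero_sub, norm_neg] at h01
  rw [zero_sub, norm_neg] at h02
  have hβ₀ : β₀ = 0 := by linarith
  have hF00 : F 0 = 0 := by rw [hF0, hβ₀, zero_smul]
  have hy1 : ‖y‖ = 1 := by linarith
  -- w = -y
  have hwy : w = -y := by
    set m : X := (1/2 : ℝ) • (y + w) with hm
    have hmB : m ∈ Metric.closedBall (0:X) 1 := by
      rw [mem_closedBall_zero_iff, hm, norm_smul, Real.norm_eq_abs,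
        show |(1:ℝ)/2| = 1/2 by norm_num]
      have := norm_add_le y w
      linarith
    have e1 : m - y = (1/2 : ℝ) • (w - y) := by rw [hm]; module
    have e2 : m - w = (1/2 : ℝ) • (y - w) := by rw [hm]; module
    have n1 : ‖m - y‖ = (1/2) * ‖w - y‖ := by
      rw [e1, norm_smul, Real.norm_eq_abs]; norm_num
    have n2 : ‖m - w‖ = (1/2) * ‖y - w‖ := by
      rw [e2, norm_smul, Real.norm_eq_abs]; norm_num
    have hsum : ‖m - y‖ + ‖m - w‖ ≤ 2 := by
      rw [n1, n2, norm_sub_rev w y]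
      have := norm_sub_le y w
      linarith
    obtain ⟨β, hβ, hb1, hb2⟩ := step4 m hmB hsum
    rw [n1] at hb1
    rw [n2, norm_sub_rev y w] at hb2
    have hβ0 : β = 0 := by linarith
    have hm0 : m = 0 := by
      apply hbij.injOn hmB h0B
      rw [hF00, hβ, hβ0, zero_smul]
    have : y + w = 0 := by
      have := congrArg (fun z => (2:ℝ) • z) hm0
      simpa [hm, smul_smul] using this
    exact eq_neg_of_add_eq_zero_right this
  -- key: F (α • y) = α • x for α ∈ [-1,1]
  have key : ∀ α : ℝ, -1 ≤ α → α ≤ 1 →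
      (α • y) ∈ Metric.closedBall (0:X) 1 ∧ F (α • y) = α • x := by
    intro α ha1 ha2
    have hpB : α • y ∈ Metric.closedBall (0:X) 1 := by
      rw [mem_closedBall_zero_iff, norm_smul, hy1, mul_one, Real.norm_eq_abs]
      exact abs_le.mpr ⟨ha1, ha2⟩
    have e1 : α • y - y = (α - 1) • y := by module
    have e2 : α • y - w = (α + 1) • y := by rw [hwy]; module
    have n1 : ‖α • y - y‖ = 1 - α := by
      rw [e1, norm_smul, hy1, mul_one, Real.norm_eq_abs,
        abs_of_nonpos (by linarith)]
      ring
    have n2 : ‖α • y - w‖ = 1 + α := by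
      rw [e2, norm_smul, hy1, mul_one, Real.norm_eq_abs,
        abs_of_nonneg (by linarith)]
      ring
    obtain ⟨β, hβ, hb1, hb2⟩ := step4 (α • y) hpB (by rw [n1, n2]; ring_nf; norm_num)
    rw [n1] at hb1
    have : β = α := by linarith
    exact ⟨hpB, by rw [hβ, this]⟩
  constructor
  · -- y is extreme
    refine ⟨hy, ?_⟩
    intro u hu v hv hseg
    obtain ⟨a, b, ha, hb, hab, hcomb⟩ := hseg
    have hun : ‖u‖ ≤ 1 := mem_closedBall_zero_iff.mp hu
    have hvn : ‖v‖ ≤ 1 := mem_closedBall_zero_iff.mp hv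
    have h0 : a • (u - y) + b • (v - y) = 0 := by
      have hc : a • u + b • v = y := hcomb
      calc a • (u - y) + b • (v - y) = a • u + b • v - (a + b) • y := by module
        _ = y - (1:ℝ) • y := by rw [hc, hab]
        _ = 0 := by module
    set p : X := a • (u - y) with hp
    have hp1 : p + y = a • u + b • y := by
      have h : p + y = a • u + (1 - a) • y := by rw [hp]; module
      rw [h, show (1 : ℝ) - a = b by linarith]
    have hp2 : y - p = a • y + b • v := by
      have h : y - p = y + b • (v - y) := by
        rw [hp]; linear_combination (norm := module) -h0
      rw [h]
      have h2 : y + b • (v - y) = (1 - b) • y + b • v := by module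
      rw [h2, show (1 : ℝ) - b = a by linarith]
    have npy : ‖p + y‖ ≤ 1 := by
      rw [hp1]
      calc ‖a • u + b • y‖ ≤ ‖a • u‖ + ‖b • y‖ := norm_add_le _ _
        _ = a * ‖u‖ + b * ‖y‖ := by
            rw [norm_smul, norm_smul, Real.norm_eq_abs, Real.norm_eq_abs,
              abs_of_pos ha, abs_of_pos hb]
        _ ≤ a * 1 + b * 1 := by
            gcongr
        _ = 1 := by linarith
    have nyp : ‖y - p‖ ≤ 1 := by
      rw [hp2]
      calc ‖a • y + b • v‖ ≤ ‖a • y‖ + ‖b • v‖ := norm_add_le _ _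
        _ = a * ‖y‖ + b * ‖v‖ := by
            rw [norm_smul, norm_smul, Real.norm_eq_abs, Real.norm_eq_abs,
              abs_of_pos ha, abs_of_pos hb]
        _ ≤ a * 1 + b * 1 := by gcongr
        _ = 1 := by linarith
    have hpB : p ∈ Metric.closedBall (0:X) 1 := by
      rw [mem_closedBall_zero_iff]
      have h : p = (1/2 : ℝ) • ((p + y) - (y - p)) := by module
      rw [h, norm_smul, Real.norm_eq_abs, show |(1:ℝ)/2| = 1/2 by norm_num]
      have := norm_sub_le (p + y) (y - p)
      linarith
    have hsum : ‖p - y‖ + ‖p - w‖ ≤ 2 := by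
      rw [norm_sub_rev, hwy, sub_neg_eq_add]
      linarith
    obtain ⟨β, hβ, hb1, hb2⟩ := step4 p hpB hsum
    rw [norm_sub_rev] at hb1
    rw [hwy, sub_neg_eq_add] at hb2
    have hβ0 : β = 0 := by linarith
    have hp0 : p = 0 := by
      apply hbij.injOn hpB h0B
      rw [hF00, hβ, hβ0, zero_smul]
    have huy : u = y := by
      rw [hp] at hp0
      rcases smul_eq_zero.mp hp0 with h | h
      · exact absurd h (ne_of_gt ha)
      · exact sub_eq_zero.mp h
    exact huy
  · -- scalar part
    intro α hα z hz hFz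
    obtain ⟨hpB, hFp⟩ := key α hα.1 hα.2
    apply hbij.injOn hz hpB
    rw [hFz, hFp]
end

section
/- Let x and y be two nonzero elements of the closed unit ball B₀ of c₀. The closed balls B(x,1) and B(y,1) (in the sup norm) cover B₀ if and only if there exists an index n such that x_i = y_i = 0 for all i ≠ n, and x_n and y_n have opposite (strict) signs. -/
open Filter Topology Metric Set ENNReal

set_option synthInstance.maxHeartbeats 1000000
set_option maxHeartbeats 1000000

noncomputable section

/-- The space `ℓ∞` of bounded real sequences, used as ambient space. -/
abbrev Linf := lp (fun _ : ℕ => ℝ) ∞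

/-- The closed unit ball of `c` (convergent sequences), viewed inside `ℓ∞`. -/
def Bc : Set Linf := {x | ‖x‖ ≤ 1 ∧ ∃ l : ℝ, Tendsto (fun n => x n) atTop (𝓝 l)}

/-- The closed unit ball of `c₀` (null sequences), viewed inside `ℓ∞`. -/
def B0 : Set Linf := {x | ‖x‖ ≤ 1 ∧ Tendsto (fun n => x n) atTop (𝓝 (0:ℝ))}

lemma coord_abs_le (f : Linf) (i : ℕ) : |f i| ≤ ‖f‖ := by
  simpa [Real.norm_eq_abs] using lp.norm_apply_le_norm ENNReal.top_ne_zero f i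

lemma norm_le_of_coords {f : Linf} {C : ℝ} (h : ∀ i, |f i| ≤ C) : ‖f‖ ≤ C := by
  rw [lp.norm_eq_ciSup]
  exact ciSup_le fun i => by simpa [Real.norm_eq_abs] using h i

lemma exists_ne_zero {f : Linf} (hf : f ≠ 0) : ∃ n, f n ≠ 0 := by
  by_contra h
  push_neg at h
  exact hf (lp.ext (funext fun i => by simpa using h i))

lemma lp_sub_apply (f g : Linf) (i : ℕ) : (f - g) i = f i - g i := by
  rw [lp.coeFn_sub]; rfl

lemma neg_apply' (f : Linf) (i : ℕ) : (-f) i = -(f i) := by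
  rw [lp.coeFn_neg]; rfl

/-- the "opposite point": for `a ≠ 0`, a value `s` with `|s| = 1` and `|s - a| = 1 + |a|`. -/
def opp (a : ℝ) : ℝ := if 0 < a then -1 else 1

lemma abs_opp (a : ℝ) : |opp a| = 1 := by
  unfold opp; split <;> simp

lemma abs_opp_sub {a : ℝ} (ha : a ≠ 0) : |opp a - a| = 1 + |a| := by
  unfold opp
  rcases lt_or_gt_of_ne ha with h | h
  · rw [if_neg (by linarith), abs_of_pos (by linarith), abs_of_neg h]; ring
  · rw [if_pos h, abs_of_neg (by linarith), abs_of_pos h]; ring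

lemma single_apply' (i k : ℕ) (a : ℝ) :
    (lp.single ∞ i a : Linf) k = if k = i then a else 0 := by
  by_cases h : k = i
  · rw [if_pos h]; subst h; exact lp.single_apply_self (E := fun _ : ℕ => ℝ) ∞ k a
  · rw [if_neg h]; exact lp.single_apply_ne (E := fun _ : ℕ => ℝ) ∞ i a h

lemma two_apply (i j k : ℕ) (a b : ℝ) :
    (lp.single ∞ i a + lp.single ∞ j b : Linf) k
      = (if k = i then a else 0) + (if k = j then b else 0) := by
  have := lp.coeFn_add (lp.single ∞ i a : Linf) (lp.single ∞ j b)
  have h2 : (lp.single ∞ i a + lp.single ∞ j b : Linf) k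
      = (lp.single ∞ i a : Linf) k + (lp.single ∞ j b : Linf) k := by
    rw [this]; rfl
  rw [h2, single_apply', single_apply']

lemma mem_B0_two (i j : ℕ) (a b : ℝ) (ha : |a| ≤ 1) (hb : |b| ≤ 1)
    (hab : i = j → b = 0) :
    (lp.single ∞ i a + lp.single ∞ j b : Linf) ∈ B0 := by
  constructor
  · apply norm_le_of_coords
    intro k
    rw [two_apply]
    by_cases hki : k = i
    · subst hki
      by_cases hkj : k = j
      · rw [if_pos rfl, if_pos hkj, hab hkj, add_zero]; exact ha
      · rw [if_pos rfl, if_neg hkj, add_zero]; exact ha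
    · by_cases hkj : k = j
      · rw [if_neg hki, if_pos hkj, zero_add]; exact hb
      · rw [if_neg hki, if_neg hkj, add_zero]; simp
  · apply Tendsto.congr' (f₁ := fun _ => (0:ℝ))
    · filter_upwards [eventually_gt_atTop (max i j)] with k hk
      have hki : k ≠ i := by omega
      have hkj : k ≠ j := by omega
      rw [two_apply, if_neg hki, if_neg hkj, add_zero]
    · exact tendsto_const_nhds

lemma dist_gt {w x : Linf} {i : ℕ} (h : 1 < |w i - x i|) : ¬ dist w x ≤ 1 := by
  intro hd
  rw [dist_eq_norm] at hd
  have h1 := coord_abs_le (w - x) i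
  rw [lp_sub_apply] at h1
  linarith

lemma gadget {x y : Linf} (h : B0 ⊆ Metric.closedBall x 1 ∪ Metric.closedBall y 1)
    {i j : ℕ} (hxi : x i ≠ 0) (hyj : y j ≠ 0) :
    i = j ∧ opp (x i) ≠ opp (y j) := by
  have key : ∀ b : ℝ, |b| ≤ 1 → (i = j → b = 0) →
      ¬ (1 < |(if i = i then opp (x i) else 0) + (if i = j then b else 0) - x i|
        ∧ 1 < |(if j = i then opp (x i) else 0) + (if j = j then b else 0) - y j|) := by
    intro b hb hab ⟨h1, h2⟩
    set w : Linf := lp.single ∞ i (opp (x i)) + lp.single ∞ j b with hw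
    have hwB : w ∈ B0 := mem_B0_two i j _ b (le_of_eq (abs_opp _)) hb hab
    have hwi : w i = (if i = i then opp (x i) else 0) + (if i = j then b else 0) :=
      two_apply i j i _ b
    have hwj : w j = (if j = i then opp (x i) else 0) + (if j = j then b else 0) :=
      two_apply i j j _ b
    rcases h hwB with hc | hc
    · exact dist_gt (by rw [hwi]; exact h1) (Metric.mem_closedBall.mp hc)
    · exact dist_gt (by rw [hwj]; exact h2) (Metric.mem_closedBall.mp hc)
  have hij : i = j := by
    by_contra hij
    refine key (opp (y j)) (le_of_eq (abs_opp _)) (fun h => absurd h hij) ⟨?_, ?_⟩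
    · rw [if_pos rfl, if_neg hij, add_zero, abs_opp_sub hxi]
      have := abs_pos.mpr hxi; linarith
    · rw [if_neg (fun h' => hij h'.symm), if_pos rfl, zero_add, abs_opp_sub hyj]
      have := abs_pos.mpr hyj; linarith
  refine ⟨hij, fun heq => ?_⟩
  subst hij
  refine key 0 (by simp) (fun _ => rfl) ⟨?_, ?_⟩
  · rw [if_pos rfl, if_pos rfl, add_zero, abs_opp_sub hxi]
    have := abs_pos.mpr hxi; linarith
  · rw [if_pos rfl, if_pos rfl, add_zero, heq, abs_opp_sub hyj]
    have := abs_pos.mpr hyj; linarith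

lemma half {x : Linf} {n : ℕ} (hx1 : ‖x‖ ≤ 1) (hsupp : ∀ i, i ≠ n → x i = 0)
    (hxn : 0 < x n) {w : Linf} (hw1 : ‖w‖ ≤ 1) (hwn : 0 ≤ w n) : dist w x ≤ 1 := by
  rw [dist_eq_norm]
  apply norm_le_of_coords
  intro i
  rw [lp_sub_apply]
  have hwi := (abs_le.mp ((coord_abs_le w i).trans hw1))
  by_cases hi : i = n
  · subst hi
    have hxi := (abs_le.mp ((coord_abs_le x i).trans hx1))
    rw [abs_le]; constructor <;> linarith
  · rw [hsupp i hi, sub_zero]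
    exact (coord_abs_le w i).trans hw1

theorem cover_ball_c0 (x y : Linf) (hx : x ∈ B0) (hy : y ∈ B0)
    (hx0 : x ≠ 0) (hy0 : y ≠ 0) :
    (B0 ⊆ Metric.closedBall x 1 ∪ Metric.closedBall y 1) ↔
      ∃ n : ℕ, (∀ i ≠ n, x i = 0 ∧ y i = 0) ∧
        ((0 < x n ∧ y n < 0) ∨ (x n < 0 ∧ 0 < y n)) := by
  constructor
  · intro h
    obtain ⟨n, hxn⟩ := exists_ne_zero hx0
    have hysupp : ∀ j, j ≠ n → y j = 0 := by
      intro j hj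
      by_contra hyj
      exact hj ((gadget h hxn hyj).1).symm
    have hyn : y n ≠ 0 := by
      obtain ⟨j, hj⟩ := exists_ne_zero hy0
      by_cases hjn : j = n
      · rwa [hjn] at hj
      · exact absurd (hysupp j hjn) hj
    have hxsupp : ∀ i, i ≠ n → x i = 0 := by
      intro i hi
      by_contra hxi
      exact hi (gadget h hxi hyn).1
    refine ⟨n, fun i hi => ⟨hxsupp i hi, hysupp i hi⟩, ?_⟩
    have hne := (gadget h hxn hyn).2
    unfold opp at hne
    by_cases hpx : 0 < x n <;> by_cases hpy : 0 < y n
    · simp [hpx, hpy] at hne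
    · exact Or.inl ⟨hpx, lt_of_le_of_ne (not_lt.mp hpy) hyn⟩
    · exact Or.inr ⟨lt_of_le_of_ne (not_lt.mp hpx) hxn, hpy⟩
    · simp [hpx, hpy] at hne
  · rintro ⟨n, hsupp, hsign⟩ w hw
    have hw1 := hw.1
    rcases hsign with ⟨hxp, hyn⟩ | ⟨hxn, hyp⟩
    · by_cases hwn : 0 ≤ w n
      · exact Or.inl (half hx.1 (fun i hi => (hsupp i hi).1) hxp hw1 hwn)
      · refine Or.inr ?_
        rw [Metric.mem_closedBall, ← dist_neg_neg]
        refine half (n := n) (by simpa using hy.1) (fun i hi => ?_) ?_ (by simpa using hw1) ?_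
        · rw [neg_apply', (hsupp i hi).2, neg_zero]
        · rw [neg_apply']; linarith
        · rw [neg_apply']; linarith [not_le.mp hwn]
    · by_cases hwn : 0 ≤ w n
      · exact Or.inr (half hy.1 (fun i hi => (hsupp i hi).2) hyp hw1 hwn)
      · refine Or.inl ?_
        rw [Metric.mem_closedBall, ← dist_neg_neg]
        refine half (n := n) (by simpa using hx.1) (fun i hi => ?_) ?_ (by simpa using hw1) ?_
        · rw [neg_apply', (hsupp i hi).1, neg_zero]
        · rw [neg_apply']; linarith
        · rw [neg_apply']; linarith [not_le.mp hwn]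
end
end

section
/- Let x and y be two nonzero elements of the closed unit ball B of c. The closed balls B(x,1) and B(y,1) cover B if and only if there exists an index n such that x_i = y_i = 0 for all i ≠ n, and x_n and y_n have opposite (strict) signs. -/
open Filter Topology Metric Set ENNReal

noncomputable section

lemma aux_norm_le_one (w : Linf) (h : ∀ i, |w i| ≤ 1) : ‖w‖ ≤ 1 :=
  lp.norm_le_of_forall_le zero_le_one (by simpa [Real.norm_eq_abs] using h)

lemma aux_apply_le (w : Linf) (i : ℕ) : |w i| ≤ ‖w‖ := by
  have h := lp.norm_apply_le_norm (E := fun _ : ℕ => ℝ) ENNReal.top_ne_zero w i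
  rwa [Real.norm_eq_abs] at h

lemma aux_dist_coord (w z : Linf) (i : ℕ) : |w i - z i| ≤ dist w z := by
  rw [dist_eq_norm]
  have := aux_apply_le (w - z) i
  rwa [lp.coeFn_sub, Pi.sub_apply] at this

lemma aux_half (z w : Linf) (n : ℕ) (hz1 : ‖z‖ ≤ 1) (hw1 : ‖w‖ ≤ 1)
    (hz : ∀ i ≠ n, z i = 0) (hzn : 0 < z n) (hwn : 0 ≤ w n) : dist w z ≤ 1 := by
  rw [dist_eq_norm]
  apply aux_norm_le_one
  intro i
  rw [lp.coeFn_sub, Pi.sub_apply]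
  by_cases hi : i = n
  · subst hi
    have h1 := abs_le.mp (le_trans (aux_apply_le w i) hw1)
    have h2 := abs_le.mp (le_trans (aux_apply_le z i) hz1)
    rw [abs_le]
    constructor <;> linarith
  · rw [hz i hi, sub_zero]
    exact le_trans (aux_apply_le w i) hw1

theorem cover_ball_c (x y : Linf) (hx : x ∈ Bc) (hy : y ∈ Bc)
    (hx0 : x ≠ 0) (hy0 : y ≠ 0) :
    (Bc ⊆ Metric.closedBall x 1 ∪ Metric.closedBall y 1) ↔
      ∃ n : ℕ, (∀ i ≠ n, x i = 0 ∧ y i = 0) ∧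
        ((0 < x n ∧ y n < 0) ∨ (x n < 0 ∧ 0 < y n)) := by
  constructor
  · intro h
    -- Step 1: for distinct indices, x i = 0 or y j = 0
    have key : ∀ i j : ℕ, i ≠ j → x i = 0 ∨ y j = 0 := by
      intro i j hij
      by_contra hc
      push_neg at hc
      obtain ⟨hxi, hyj⟩ := hc
      set s : ℝ := if 0 < x i then -1 else 1 with hs
      set t : ℝ := if 0 < y j then -1 else 1 with ht
      set w : Linf := lp.single ∞ i s + lp.single ∞ j t with hwdef
      have hwapp : ∀ k, w k = (if k = i then s else 0) + (if k = j then t else 0) := by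
        intro k
        have : w k = (lp.single ∞ i s : Linf) k + (lp.single ∞ j t : Linf) k := by
          rw [hwdef, lp.coeFn_add, Pi.add_apply]
        rw [this]
        congr 1
        · by_cases hk : k = i
          · subst hk; rw [if_pos rfl, lp.single_apply_self]
          · rw [if_neg hk, lp.single_apply_ne _ _ _ hk]
        · by_cases hk : k = j
          · subst hk; rw [if_pos rfl, lp.single_apply_self]
          · rw [if_neg hk, lp.single_apply_ne _ _ _ hk]
      have hs1 : |s| ≤ 1 := by rw [hs]; split_ifs <;> simp
      have ht1 : |t| ≤ 1 := by rw [ht]; split_ifs <;> simp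
      have hwi : w i = s := by rw [hwapp, if_pos rfl, if_neg hij]; ring
      have hwj : w j = t := by rw [hwapp, if_neg (Ne.symm hij), if_pos rfl]; ring
      have hwBc : w ∈ Bc := by
        refine ⟨aux_norm_le_one w fun k => ?_, 0, ?_⟩
        · rw [hwapp]; split_ifs <;> simp_all
        · have hev : (fun k => w k) =ᶠ[atTop] (fun _ => (0:ℝ)) := by
            filter_upwards [eventually_gt_atTop (max i j)] with k hk
            rw [hwapp, if_neg (by omega), if_neg (by omega)]; ring
          exact Tendsto.congr' hev.symm tendsto_const_nhds
      have hxgt : ¬ dist w x ≤ 1 := by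
        intro hd
        have hco := aux_dist_coord w x i
        rw [hwi] at hco
        have : 1 < |s - x i| := by
          rcases lt_or_gt_of_ne hxi with hlt | hgt
          · have hsv : s = 1 := by rw [hs, if_neg (by linarith)]
            exact lt_abs.mpr (Or.inl (by rw [hsv]; linarith))
          · have hsv : s = -1 := by rw [hs, if_pos hgt]
            exact lt_abs.mpr (Or.inr (by rw [hsv]; linarith))
        linarith
      have hygt : ¬ dist w y ≤ 1 := by
        intro hd
        have hco := aux_dist_coord w y j
        rw [hwj] at hco
        have : 1 < |t - y j| := by
          rcases lt_or_gt_of_ne hyj with hlt | hgt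
          · have htv : t = 1 := by rw [ht, if_neg (by linarith)]
            exact lt_abs.mpr (Or.inl (by rw [htv]; linarith))
          · have htv : t = -1 := by rw [ht, if_pos hgt]
            exact lt_abs.mpr (Or.inr (by rw [htv]; linarith))
        linarith
      rcases h hwBc with hm | hm
      · exact hxgt (Metric.mem_closedBall.mp hm)
      · exact hygt (Metric.mem_closedBall.mp hm)
    -- Step 2: find the common support index n
    have hxn : ∃ n, x n ≠ 0 := by
      by_contra hc
      push_neg at hc
      exact hx0 (lp.eq_zero_iff_coeFn_eq_zero.mpr (funext hc))
    obtain ⟨n, hxn⟩ := hxn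
    have hyi : ∀ i ≠ n, y i = 0 := by
      intro i hi
      rcases key n i (Ne.symm hi) with h0 | h0
      · exact absurd h0 hxn
      · exact h0
    have hyn : y n ≠ 0 := by
      intro h0
      apply hy0
      apply lp.eq_zero_iff_coeFn_eq_zero.mpr
      funext i
      by_cases hi : i = n
      · subst hi; exact h0
      · exact hyi i hi
    have hxi : ∀ i ≠ n, x i = 0 := by
      intro i hi
      rcases key i n hi with h0 | h0
      · exact h0
      · exact absurd h0 hyn
    refine ⟨n, fun i hi => ⟨hxi i hi, hyi i hi⟩, ?_⟩
    -- Step 3: opposite signs, via the witness w = single n (-sign (x n))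
    set s : ℝ := if 0 < x n then -1 else 1 with hs
    set w : Linf := lp.single ∞ n s with hwdef
    have hwapp : ∀ k, w k = if k = n then s else 0 := by
      intro k
      by_cases hk : k = n
      · subst hk; rw [if_pos rfl, hwdef, lp.single_apply_self]
      · rw [if_neg hk, hwdef, lp.single_apply_ne _ _ _ hk]
    have hwn : w n = s := by rw [hwapp, if_pos rfl]
    have hwBc : w ∈ Bc := by
      refine ⟨aux_norm_le_one w fun k => ?_, 0, ?_⟩
      · rw [hwapp]; split_ifs
        · rw [hs]; split_ifs <;> simp
        · simp
      · have hev : (fun k => w k) =ᶠ[atTop] (fun _ => (0:ℝ)) := by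
          filter_upwards [eventually_gt_atTop n] with k hk
          rw [hwapp, if_neg (by omega)]
        exact Tendsto.congr' hev.symm tendsto_const_nhds
    have hxgt : ¬ dist w x ≤ 1 := by
      intro hd
      have hco := aux_dist_coord w x n
      rw [hwn] at hco
      have : 1 < |s - x n| := by
        rcases lt_or_gt_of_ne hxn with hlt | hgt
        · have hsv : s = 1 := by rw [hs, if_neg (by linarith)]
          exact lt_abs.mpr (Or.inl (by rw [hsv]; linarith))
        · have hsv : s = -1 := by rw [hs, if_pos hgt]
          exact lt_abs.mpr (Or.inr (by rw [hsv]; linarith))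
      linarith
    have hdy : dist w y ≤ 1 := by
      rcases h hwBc with hm | hm
      · exact absurd (Metric.mem_closedBall.mp hm) hxgt
      · exact Metric.mem_closedBall.mp hm
    have hco := aux_dist_coord w y n
    rw [hwn] at hco
    rcases lt_or_gt_of_ne hxn with hlt | hgt
    · -- x n < 0, s = 1, so |1 - y n| ≤ 1 hence 0 ≤ y n, hence 0 < y n
      right
      refine ⟨hlt, ?_⟩
      have hsv : s = 1 := by rw [hs, if_neg (by linarith)]
      rw [hsv] at hco
      have := abs_le.mp (le_trans hco hdy)
      rcases lt_or_gt_of_ne hyn with h1 | h1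
      · linarith [this.2]
      · exact h1
    · -- 0 < x n, s = -1, so |-1 - y n| ≤ 1 hence y n ≤ 0, hence y n < 0
      left
      refine ⟨hgt, ?_⟩
      have hsv : s = -1 := by rw [hs, if_pos hgt]
      rw [hsv] at hco
      have := abs_le.mp (le_trans hco hdy)
      rcases lt_or_gt_of_ne hyn with h1 | h1
      · exact h1
      · linarith [this.1]
  · rintro ⟨n, hsupp, hsign⟩ w hw
    have hw1 := hw.1
    rcases le_total 0 (w n) with hwn | hwn
    · rcases hsign with ⟨hxn, _⟩ | ⟨_, hyn⟩
      · exact Or.inl (Metric.mem_closedBall.mpr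
          (aux_half x w n hx.1 hw1 (fun i hi => (hsupp i hi).1) hxn hwn))
      · exact Or.inr (Metric.mem_closedBall.mpr
          (aux_half y w n hy.1 hw1 (fun i hi => (hsupp i hi).2) hyn hwn))
    · have hneg : ∀ z : Linf, ∀ i, (-z) i = -(z i) := by
        intro z i; rw [lp.coeFn_neg, Pi.neg_apply]
      rcases hsign with ⟨_, hyn⟩ | ⟨hxn, _⟩
      · refine Or.inr (Metric.mem_closedBall.mpr ?_)
        rw [← dist_neg_neg]
        refine aux_half (-y) (-w) n (by rw [norm_neg]; exact hy.1) (by rw [norm_neg]; exact hw1)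
          (fun i hi => by rw [hneg, (hsupp i hi).2, neg_zero]) ?_ ?_
        · rw [hneg]; linarith
        · rw [hneg]; linarith
      · refine Or.inl (Metric.mem_closedBall.mpr ?_)
        rw [← dist_neg_neg]
        refine aux_half (-x) (-w) n (by rw [norm_neg]; exact hx.1) (by rw [norm_neg]; exact hw1)
          (fun i hi => by rw [hneg, (hsupp i hi).1, neg_zero]) ?_ ?_
        · rw [hneg]; linarith
        · rw [hneg]; linarith
end
end

section
/- Let F̃ : B₀ → B₀ be a non-expansive bijection of the unit ball of c₀ onto itself satisfying: for each x ∈ B₀ and n ∈ ℕ, if x_n = 0 then F̃(x)_n = 0, if x_n < 0 then F̃(x)_n ≤ 0, and if x_n > 0 then F̃(x)_n ≥ 0. Then for each y ∈ B₀ and n ∈ ℕ: if y_n < 0 then F̃⁻¹(y)_n < 0, and if y_n > 0 then F̃⁻¹(y)_n > 0. -/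
open Filter Topology Metric Set ENNReal

noncomputable section

theorem inverse_sign_strict_c0 (F : Linf → Linf) (hbij : Set.BijOn F B0 B0)
    (hne : ∀ a ∈ B0, ∀ b ∈ B0, ‖F a - F b‖ ≤ ‖a - b‖)
    (hsign : ∀ x ∈ B0, ∀ n : ℕ,
      (x n = 0 → F x n = 0) ∧ (x n < 0 → F x n ≤ 0) ∧ (0 < x n → 0 ≤ F x n)) :
    ∀ y ∈ B0, ∀ x ∈ B0, F x = y → ∀ n : ℕ,
      (y n < 0 → x n < 0) ∧ (0 < y n → 0 < x n) := by
  intro y hy x hx hFx n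
  obtain ⟨h0, hneg, hpos⟩ := hsign x hx n
  subst hFx
  constructor
  · intro h
    rcases lt_trichotomy (x n) 0 with h1 | h1 | h1
    · exact h1
    · exact absurd (h0 h1) (by linarith)
    · exact absurd (hpos h1) (by linarith)
  · intro h
    rcases lt_trichotomy (x n) 0 with h1 | h1 | h1
    · exact absurd (hneg h1) (by linarith)
    · exact absurd (h0 h1) (by linarith)
    · exact h1
end
end

section
/- Let F̃ : B₀ → B₀ be a non-expansive bijection of the unit ball of c₀ satisfying the sign conditions (x_n = 0 ⇒ F̃(x)_n = 0; x_n < 0 ⇒ F̃(x)_n ≤ 0; x_n > 0 ⇒ F̃(x)_n ≥ 0). Then for each x ∈ B₀ and n ∈ ℕ: if x_n < 0 then F̃(x)_n ∈ [x_n, 0], and if x_n > 0 then F̃(x)_n ∈ [0, x_n]. -/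
open Filter Topology Metric Set ENNReal

noncomputable section

theorem contraction_toward_zero_c0 (F : Linf → Linf) (hbij : Set.BijOn F B0 B0)
    (hne : ∀ a ∈ B0, ∀ b ∈ B0, ‖F a - F b‖ ≤ ‖a - b‖)
    (hsign : ∀ x ∈ B0, ∀ n : ℕ,
      (x n = 0 → F x n = 0) ∧ (x n < 0 → F x n ≤ 0) ∧ (0 < x n → 0 ≤ F x n)) :
    ∀ x ∈ B0, ∀ n : ℕ,
      (x n < 0 → F x n ∈ Set.Icc (x n) 0) ∧
      (0 < x n → F x n ∈ Set.Icc 0 (x n)) := by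
  intro x hx n
  set y : Linf := x - lp.single ∞ n (x n) with hy
  have hyco : ∀ m, m ≠ n → y m = x m := by
    intro m hm
    simp [hy, lp.single_apply_ne _ _ _ hm, Pi.single_apply, hm]
  have hyn : y n = 0 := by simp [hy, lp.single_apply_self]
  have hyB : y ∈ B0 := by
    constructor
    · refine lp.norm_le_of_forall_le zero_le_one fun m => ?_
      rcases eq_or_ne m n with rfl | hm
      · simp [hyn]
      · rw [hyco m hm]
        exact (lp.norm_apply_le_norm ENNReal.top_ne_zero x m).trans hx.1
    · refine hx.2.congr' ?_
      filter_upwards [eventually_gt_atTop n] with m hm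
      exact (hyco m (Nat.ne_of_gt hm)).symm
  have hFy : F y n = 0 := (hsign y hyB n).1 hyn
  have hkey : |F x n| ≤ |x n| := by
    have h1 : ‖(F x - F y) n‖ ≤ ‖F x - F y‖ :=
      lp.norm_apply_le_norm ENNReal.top_ne_zero _ n
    have h2 : ‖F x - F y‖ ≤ ‖x - y‖ := hne x hx y hyB
    have h3 : ‖x - y‖ ≤ |x n| := by
      refine lp.norm_le_of_forall_le (abs_nonneg _) fun m => ?_
      rcases eq_or_ne m n with rfl | hm
      · simp [hyn]
      · simp [hyco m hm]
    have : (F x - F y) n = F x n := by simp [hFy]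
    calc |F x n| = ‖(F x - F y) n‖ := by rw [this]; rfl
      _ ≤ |x n| := h1.trans (h2.trans h3)
  constructor
  · intro hlt
    have hle := (hsign x hx n).2.1 hlt
    refine ⟨?_, hle⟩
    have := abs_le.mp hkey
    rw [abs_of_neg hlt] at this
    linarith [this.1]
  · intro hlt
    have hge := (hsign x hx n).2.2 hlt
    refine ⟨hge, ?_⟩
    have := abs_le.mp hkey
    rw [abs_of_pos hlt] at this
    linarith [this.2]
end
end

section
/- Let F̃ : B₀ → B₀ be a non-expansive bijection of the unit ball of c₀ satisfying the contraction-toward-zero conditions (x_n < 0 ⇒ F̃(x)_n ∈ [x_n, 0]; x_n > 0 ⇒ F̃(x)_n ∈ [0, x_n]; x_n = 0 ⇒ F̃(x)_n = 0). Let y ∈ B₀ be such that the set S = {i ∈ ℕ : y_i = 0} is finite. Then F̃⁻¹(y)_i = 0 for each i ∈ S. -/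
open Filter Topology Metric Set ENNReal

noncomputable section

theorem inverse_zero_of_finitely_many_zeros_c0 (F : Linf → Linf)
    (hbij : Set.BijOn F B0 B0)
    (hne : ∀ a ∈ B0, ∀ b ∈ B0, ‖F a - F b‖ ≤ ‖a - b‖)
    (hcon : ∀ x ∈ B0, ∀ n : ℕ,
      (x n < 0 → F x n ∈ Set.Icc (x n) 0) ∧
      (0 < x n → F x n ∈ Set.Icc 0 (x n)) ∧
      (x n = 0 → F x n = 0)) :
    ∀ y ∈ B0, {i : ℕ | y i = 0}.Finite →
      ∀ x ∈ B0, F x = y → ∀ i ∈ {i : ℕ | y i = 0}, x i = 0 := by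
  -- basic facts
  have hsign : ∀ a ∈ B0, ∀ n : ℕ,
      (0 < F a n → F a n ≤ a n) ∧ (F a n < 0 → a n ≤ F a n) := by
    intro a ha n
    rcases lt_trichotomy (a n) 0 with h | h | h
    · have := (hcon a ha n).1 h
      constructor
      · intro hpos; linarith [this.2]
      · intro _; exact this.1
    · have := (hcon a ha n).2.2 h
      rw [this]
      exact ⟨fun h0 => absurd h0 (lt_irrefl _), fun h0 => absurd h0 (lt_irrefl _)⟩
    · have := ((hcon a ha n).2.1 h)
      constructor
      · intro _; exact this.2
      · intro hneg; linarith [this.1]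
  have habs : ∀ a : Linf, a ∈ B0 → ∀ n : ℕ, |a n| ≤ 1 := by
    intro a ha n
    calc |a n| = ‖a n‖ := rfl
    _ ≤ ‖a‖ := lp.norm_apply_le_norm ENNReal.top_ne_zero a n
    _ ≤ 1 := ha.1
  suffices H : ∀ k : ℕ, ∀ y ∈ B0, ∀ _ : {i : ℕ | y i = 0}.Finite,
      {i : ℕ | y i = 0}.ncard ≤ k →
      ∀ x ∈ B0, F x = y → ∀ i ∈ {i : ℕ | y i = 0}, x i = 0 by
    intro y hy hS x hx hFx i hi
    exact H _ y hy hS le_rfl x hx hFx i hi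
  intro k
  induction k with
  | zero =>
    intro y hy hS hcard x hx hFx i hi
    have : {i : ℕ | y i = 0} = ∅ := (Set.ncard_eq_zero hS).1 (Nat.le_zero.1 hcard)
    rw [this] at hi; exact absurd hi (Set.notMem_empty i)
  | succ k ih =>
    intro y hy hS hcard x hx hFx i hi
    by_contra hxi
    -- define y'
    set g : ℕ → ℝ := fun n => if y n = 0 then (if x n = 0 then 0 else if 0 < x n then 1 else -1) else y n with hg
    have hgabs : ∀ n, |g n| ≤ 1 := by
      intro n
      by_cases h1 : y n = 0
      · by_cases h2 : x n = 0
        · simp [hg, h1, h2]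
        · by_cases h3 : 0 < x n <;> simp [hg, h1, h2, h3]
      · simpa [hg, h1] using habs y hy n
    have hmem : Memℓp g ∞ := by
      apply memℓp_infty
      refine ⟨1, ?_⟩
      rintro r ⟨n, rfl⟩
      simpa [Real.norm_eq_abs] using hgabs n
    set y' : Linf := ⟨g, hmem⟩ with hy'def
    have hy'app : ∀ n, y' n = g n := fun n => rfl
    -- y' ∈ B0
    have hgy : ∀ᶠ n in atTop, g n = y n := by
      have : {n : ℕ | y n = 0}ᶜ ∈ Filter.cofinite := hS.compl_mem_cofinite
      rw [Nat.cofinite_eq_atTop] at this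
      filter_upwards [this] with n hn
      simp only [Set.mem_compl_iff, Set.mem_setOf_eq] at hn
      simp [hg, hn]
    have hy'B0 : y' ∈ B0 := by
      constructor
      · exact lp.norm_le_of_forall_le zero_le_one (fun n => by simpa [Real.norm_eq_abs] using hgabs n)
      · exact hy.2.congr' (hgy.mono fun n h => h.symm)
    -- zero set of y'
    have hzset : {n : ℕ | y' n = 0} = {n : ℕ | y n = 0 ∧ x n = 0} := by
      ext n
      simp only [Set.mem_setOf_eq, hy'app, hg]
      by_cases h1 : y n = 0
      · by_cases h2 : x n = 0
        · simp [h1, h2]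
        · by_cases h3 : 0 < x n <;> simp [h1, h2, h3]
      · simp [h1]
    have hsub : {n : ℕ | y' n = 0} ⊂ {n : ℕ | y n = 0} := by
      rw [hzset]
      constructor
      · intro n hn; exact hn.1
      · intro hsup
        have := hsup hi
        exact hxi this.2
    have hS' : {n : ℕ | y' n = 0}.Finite := hS.subset hsub.subset
    have hcard' : {n : ℕ | y' n = 0}.ncard ≤ k := by
      have := Set.ncard_lt_ncard hsub hS
      omega
    -- z := preimage of y'
    obtain ⟨z, hzB0, hFz⟩ := hbij.surjOn hy'B0
    -- z vanishes on zero set of y'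
    have hzvanish : ∀ n, y n = 0 → x n = 0 → z n = 0 := by
      intro n h1 h2
      exact ih y' hy'B0 hS' hcard' z hzB0 hFz n (by rw [hzset]; exact ⟨h1, h2⟩)
    -- coordinate estimates
    have hkey : ∀ n, |z n - x n| < 1 := by
      intro n
      have hza := habs z hzB0 n
      have hxa := habs x hx n
      by_cases h1 : y n = 0
      · by_cases h2 : x n = 0
        · rw [hzvanish n h1 h2, h2]; norm_num
        · rcases lt_or_gt_of_ne h2 with hneg | hpos
          · have hFzn : F z n = -1 := by
              rw [hFz, hy'app]; simp [hg, h1, h2, not_lt.2 hneg.le]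
            have : z n ≤ -1 := by
              have := (hsign z hzB0 n).2 (by rw [hFzn]; norm_num)
              rwa [hFzn] at this
            have hz1 : z n = -1 := le_antisymm this (abs_le.1 hza).1
            rw [hz1, abs_lt]
            constructor <;> linarith [(abs_le.1 hxa).1, (abs_le.1 hxa).2]
          · have hFzn : F z n = 1 := by
              rw [hFz, hy'app]; simp [hg, h1, h2, hpos]
            have : 1 ≤ z n := by
              have := (hsign z hzB0 n).1 (by rw [hFzn]; norm_num)
              rwa [hFzn] at this
            have hz1 : z n = 1 := le_antisymm (abs_le.1 hza).2 this
            rw [hz1, abs_lt]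
            constructor <;> linarith [(abs_le.1 hxa).1, (abs_le.1 hxa).2]
      · have hFzn : F z n = y n := by rw [hFz, hy'app]; simp [hg, h1]
        have hFxn : F x n = y n := by rw [hFx]
        rcases lt_or_gt_of_ne h1 with hneg | hpos
        · have hz' : z n ≤ y n := by
            have := (hsign z hzB0 n).2 (by rw [hFzn]; exact hneg)
            rwa [hFzn] at this
          have hx' : x n ≤ y n := by
            have := (hsign x hx n).2 (by rw [hFxn]; exact hneg)
            rwa [hFxn] at this
          rw [abs_lt]
          constructor
          · linarith [(abs_le.1 hza).1]
          · linarith [(abs_le.1 hxa).1]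
        · have hz' : y n ≤ z n := by
            have := (hsign z hzB0 n).1 (by rw [hFzn]; exact hpos)
            rwa [hFzn] at this
          have hx' : y n ≤ x n := by
            have := (hsign x hx n).1 (by rw [hFxn]; exact hpos)
            rwa [hFxn] at this
          rw [abs_lt]
          constructor
          · linarith [(abs_le.1 hxa).2]
          · linarith [(abs_le.1 hza).2]
    -- norm lower bound
    have hlow : (1:ℝ) ≤ ‖z - x‖ := by
      have h1 : ‖F z - F x‖ ≤ ‖z - x‖ := hne z hzB0 x hx
      rw [hFz, hFx] at h1
      refine le_trans ?_ h1
      have : ‖(y' - y) i‖ ≤ ‖y' - y‖ := lp.norm_apply_le_norm ENNReal.top_ne_zero (y' - y) i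
      have hyi : y i = 0 := hi
      have hcoe : (y' - y) i = y' i - y i := by
        rw [lp.coeFn_sub]; rfl
      rw [hcoe, hyi, sub_zero, hy'app] at this
      refine le_trans ?_ this
      have : g i = 1 ∨ g i = -1 := by
        by_cases h3 : 0 < x i <;> simp [hg, hyi, hxi, h3]
      rcases this with h | h <;> simp [h, Real.norm_eq_abs]
    -- coordinates tend to 0
    have hd0 : Tendsto (fun n => |z n - x n|) atTop (𝓝 0) := by
      have := (hzB0.2.sub hx.2)
      rw [sub_zero] at this
      simpa using this.abs
    -- contradiction: sup of a null sequence each < 1 cannot be ≥ 1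
    obtain ⟨N, hN⟩ := (Metric.tendsto_atTop.1 hd0 (1/2) (by norm_num))
    have hnonempty : (Finset.range (N+1)).Nonempty := ⟨0, Finset.mem_range.2 (Nat.succ_pos N)⟩
    set C : ℝ := max ((Finset.range (N+1)).sup' hnonempty (fun n => |z n - x n|)) (1/2) with hC
    have hC1 : C < 1 := by
      apply max_lt _ (by norm_num)
      exact (Finset.sup'_lt_iff hnonempty).2 fun n _ => hkey n
    have hCge : ∀ n, |z n - x n| ≤ C := by
      intro n
      rcases le_or_gt n N with h | h
      · exact le_trans (Finset.le_sup' (fun n => |z n - x n|) (Finset.mem_range.2 (Nat.lt_succ_of_le h))) (le_max_left _ _)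
      · have := hN n h.le
        rw [Real.dist_eq, sub_zero, abs_abs] at this
        exact le_trans this.le (le_max_right _ _)
    have hup : ‖z - x‖ ≤ C := by
      apply lp.norm_le_of_forall_le (le_trans (by norm_num : (0:ℝ) ≤ 1/2) (le_max_right _ _))
      intro n
      have hcoe : (z - x) n = z n - x n := by rw [lp.coeFn_sub]; rfl
      rw [hcoe, Real.norm_eq_abs]
      exact hCge n
    linarith
end
end

section
/- Let F̃ : B₀ → B₀ be a non-expansive bijection of the unit ball of c₀ satisfying the contraction-toward-zero conditions (x_n < 0 ⇒ F̃(x)_n ∈ [x_n, 0]; x_n > 0 ⇒ F̃(x)_n ∈ [0, x_n]; x_n = 0 ⇒ F̃(x)_n = 0). Let x ∈ B₀ be such that the set S = {i : x_i = 0} is finite. Then F̃(x)_i ≠ 0 for each i ∉ S. -/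
open Filter Topology Metric Set ENNReal

noncomputable section

theorem image_nonzero_of_finitely_many_zeros_c0 (F : Linf → Linf)
    (hbij : Set.BijOn F B0 B0)
    (hne : ∀ a ∈ B0, ∀ b ∈ B0, ‖F a - F b‖ ≤ ‖a - b‖)
    (hcon : ∀ x ∈ B0, ∀ n : ℕ,
      (x n < 0 → F x n ∈ Set.Icc (x n) 0) ∧
      (0 < x n → F x n ∈ Set.Icc 0 (x n)) ∧
      (x n = 0 → F x n = 0)) :
    ∀ x ∈ B0, {i : ℕ | x i = 0}.Finite →
      ∀ i ∉ {i : ℕ | x i = 0}, F x i ≠ 0 := by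
  -- coordinates are bounded by the norm
  have norm_coord : ∀ (u : Linf) (j : ℕ), |u j| ≤ ‖u‖ := fun u j => by
    have h := lp.norm_apply_le_norm (E := fun _ : ℕ => ℝ) ENNReal.top_ne_zero u j
    rwa [Real.norm_eq_abs] at h
  -- sign lemmas
  have sign_pos : ∀ u ∈ B0, ∀ j : ℕ, 0 < F u j → F u j ≤ u j := by
    intro u hu j h
    obtain ⟨h1, h2, h3⟩ := hcon u hu j
    rcases lt_trichotomy (u j) 0 with hu' | hu' | hu'
    · exact absurd h (not_lt.mpr (h1 hu').2)
    · exact absurd (h3 hu') h.ne'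
    · exact (h2 hu').2
  have sign_neg : ∀ u ∈ B0, ∀ j : ℕ, F u j < 0 → u j ≤ F u j := by
    intro u hu j h
    obtain ⟨h1, h2, h3⟩ := hcon u hu j
    rcases lt_trichotomy (u j) 0 with hu' | hu' | hu'
    · exact (h1 hu').1
    · exact absurd (h3 hu') h.ne
    · exact absurd h (not_lt.mpr (h2 hu').1)
  -- the key step producing a bad point with strictly fewer zeros
  have step : ∀ x ∈ B0, ∀ i : ℕ, x i ≠ 0 → F x i = 0 →
      ∃ a ∈ B0, ∃ j : ℕ, x j = 0 ∧ a j ≠ 0 ∧ F a j = 0 ∧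
        {k : ℕ | a k = 0} ⊆ {k : ℕ | x k = 0} \ {j} := by
    intro x hx i hxi hFxi
    set ε := |x i| with hεdef
    have hε : 0 < ε := abs_pos.mpr hxi
    set vf : ℕ → ℝ := fun j => if ε ≤ |x j| then (if 0 < x j then (1:ℝ) else -1) else x j
      with hvfdef
    have hvf_le : ∀ j, |vf j| ≤ 1 := by
      intro j
      simp only [hvfdef]
      split
      · split <;> norm_num
      · exact le_trans (norm_coord x j) hx.1
    have hmem : Memℓp vf ∞ := memℓp_infty ⟨1, by
      rintro r ⟨j, rfl⟩
      simpa using hvf_le j⟩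
    set v : Linf := ⟨vf, hmem⟩ with hvdef
    have hvk_val : ∀ k, v k = if ε ≤ |x k| then (if 0 < x k then (1:ℝ) else -1) else x k :=
      fun k => rfl
    have hvB0 : v ∈ B0 := by
      refine ⟨lp.norm_le_of_forall_le zero_le_one (fun j => by
        rw [Real.norm_eq_abs]; exact hvf_le j), ?_⟩
      have hev : ∀ᶠ j in atTop, |x j| < ε := by
        have := Metric.tendsto_nhds.mp hx.2 ε hε
        simpa [Real.dist_eq] using this
      refine hx.2.congr' ?_
      filter_upwards [hev] with j hj
      rw [hvk_val j, if_neg (not_le.mpr hj)]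
    obtain ⟨a, haB0, hFa⟩ := hbij.surjOn hvB0
    have hFa_app : ∀ j, F a j = v j := fun j => by rw [hFa]
    -- facts about coordinates of a
    have haT1 : ∀ k, ε ≤ |x k| → 0 < x k → a k = 1 := by
      intro k hk hk'
      have hvk : F a k = 1 := by rw [hFa_app k, hvk_val k, if_pos hk, if_pos hk']
      have h1 : (1:ℝ) ≤ a k := by
        have := sign_pos a haB0 k (by rw [hvk]; norm_num)
        linarith [this, hvk.symm.le]
      have h2 : a k ≤ 1 := le_trans (le_abs_self _) (le_trans (norm_coord a k) haB0.1)
      linarith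
    have haT2 : ∀ k, ε ≤ |x k| → x k < 0 → a k = -1 := by
      intro k hk hk'
      have hxkne : ¬ 0 < x k := not_lt.mpr hk'.le
      have hvk : F a k = -1 := by rw [hFa_app k, hvk_val k, if_pos hk, if_neg hxkne]
      have h1 : a k ≤ -1 := by
        have := sign_neg a haB0 k (by rw [hvk]; norm_num)
        linarith [this, hvk.le]
      have h2 : -1 ≤ a k := neg_le_of_abs_le (le_trans (norm_coord a k) haB0.1)
      linarith
    have haP : ∀ k, ¬ ε ≤ |x k| → 0 < x k → x k ≤ a k := by
      intro k hk hk'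
      have hvk : F a k = x k := by rw [hFa_app k, hvk_val k, if_neg hk]
      have := sign_pos a haB0 k (by rw [hvk]; exact hk')
      linarith [this, hvk.ge]
    have haN : ∀ k, ¬ ε ≤ |x k| → x k < 0 → a k ≤ x k := by
      intro k hk hk'
      have hvk : F a k = x k := by rw [hFa_app k, hvk_val k, if_neg hk]
      have := sign_neg a haB0 k (by rw [hvk]; exact hk')
      linarith [this, hvk.le]
    have hanz : ∀ k, x k ≠ 0 → a k ≠ 0 := by
      intro k hk
      rcases lt_or_gt_of_ne hk with h | h
      · by_cases hT : ε ≤ |x k|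
        · rw [haT2 k hT h]; norm_num
        · have := haN k hT h; intro h0; rw [h0] at this; linarith
      · by_cases hT : ε ≤ |x k|
        · rw [haT1 k hT h]; norm_num
        · have := haP k hT h; intro h0; rw [h0] at this; linarith
    -- the norm inequality
    have hax : (1:ℝ) ≤ ‖a - x‖ := by
      have h1 : ‖F a - F x‖ ≤ ‖a - x‖ := hne a haB0 x hx
      have hvi : |v i| = 1 := by
        rw [hvk_val i, if_pos le_rfl]
        split <;> norm_num
      have h2 : (1:ℝ) ≤ ‖F a - F x‖ := by
        have h3 : ‖(F a - F x) i‖ ≤ ‖F a - F x‖ :=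
          lp.norm_apply_le_norm ENNReal.top_ne_zero _ i
        have h4 : (F a - F x) i = v i := by
          rw [lp.coeFn_sub]
          simp [hFa_app i, hFxi]
        rw [h4, Real.norm_eq_abs, hvi] at h3
        exact h3
      linarith
    -- find a coordinate realizing the norm
    have hex : ∃ j, 1 ≤ |a j - x j| := by
      by_contra hc
      push_neg at hc
      have hax0 : Tendsto (fun j => a j - x j) atTop (𝓝 0) := by
        simpa using haB0.2.sub hx.2
      have hev : ∀ᶠ j in atTop, |a j - x j| < 1/2 := by
        have := Metric.tendsto_nhds.mp hax0 (1/2) (by norm_num)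
        simpa [Real.dist_eq] using this
      obtain ⟨K, hK⟩ := Filter.eventually_atTop.mp hev
      have hne' : (Finset.range (K+1)).Nonempty := ⟨0, Finset.mem_range.mpr (Nat.succ_pos K)⟩
      set c := (Finset.range (K+1)).sup' hne' (fun j => |a j - x j|) with hcdef
      have hc1 : c < 1 := (Finset.sup'_lt_iff hne').mpr (fun j _ => hc j)
      have hbound : ∀ j, ‖(a - x) j‖ ≤ max c (1/2) := by
        intro j
        have hco : (a - x) j = a j - x j := by rw [lp.coeFn_sub]; rfl
        rw [hco, Real.norm_eq_abs]
        rcases le_or_gt j K with h | h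
        · exact le_max_of_le_left
            (Finset.le_sup' (fun j => |a j - x j|) (Finset.mem_range.mpr (by omega)))
        · exact le_max_of_le_right (hK j (by omega)).le
      have h5 : ‖a - x‖ ≤ max c (1/2) :=
        lp.norm_le_of_forall_le (le_max_of_le_right (by norm_num)) hbound
      have h6 : max c (1/2) < 1 := max_lt hc1 (by norm_num)
      linarith
    obtain ⟨j, hj⟩ := hex
    have hxj1 : |x j| ≤ 1 := le_trans (norm_coord x j) hx.1
    have haj1 : |a j| ≤ 1 := le_trans (norm_coord a j) haB0.1
    obtain ⟨hxjl, hxjr⟩ := abs_le.mp hxj1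
    obtain ⟨hajl, hajr⟩ := abs_le.mp haj1
    by_cases hT : ε ≤ |x j|
    · -- impossible: a j = ±1 with the same sign as x j
      have hxjne : x j ≠ 0 := by
        intro h0; rw [h0] at hT; simp at hT; linarith
      rcases lt_or_gt_of_ne hxjne with h | h
      · rw [haT2 j hT h] at hj
        rw [show (-1 : ℝ) - x j = -(1 + x j) by ring, abs_neg,
          abs_of_nonneg (by linarith)] at hj
        linarith
      · rw [haT1 j hT h] at hj
        rw [abs_of_nonneg (by linarith)] at hj
        linarith
    · by_cases hxj0 : x j = 0
      · -- the desired new bad point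
        have hanzj : a j ≠ 0 := by
          intro h0
          rw [h0, hxj0] at hj
          norm_num at hj
        refine ⟨a, haB0, j, hxj0, hanzj, ?_, ?_⟩
        · rw [hFa_app j, hvk_val j, if_neg hT]
          exact hxj0
        · intro k hk
          simp only [Set.mem_setOf_eq] at hk
          have hxk : x k = 0 := by
            by_contra hxk
            exact hanz k hxk hk
          refine ⟨hxk, ?_⟩
          simp only [Set.mem_singleton_iff]
          intro hkj
          rw [hkj] at hk
          exact hanzj hk
      · -- impossible: a j has the same sign as x j and |a j - x j| < 1
        rcases lt_or_gt_of_ne hxj0 with h | h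
        · have h1 := haN j hT h
          rw [abs_of_nonpos (by linarith)] at hj
          linarith
        · have h1 := haP j hT h
          rw [abs_of_nonneg (by linarith)] at hj
          linarith
  -- strong induction on the number of zeros
  have key : ∀ n : ℕ, ∀ x, x ∈ B0 → ∀ hfin : {i : ℕ | x i = 0}.Finite,
      hfin.toFinset.card ≤ n → ∀ i : ℕ, x i ≠ 0 → F x i ≠ 0 := by
    intro n
    induction n with
    | zero =>
      intro x hx hfin hcard i hxi hFxi
      obtain ⟨a, -, j, hxj, -, -, -⟩ := step x hx i hxi hFxi
      have hjmem : j ∈ hfin.toFinset := hfin.mem_toFinset.mpr hxj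
      have := Finset.card_pos.mpr ⟨j, hjmem⟩
      omega
    | succ n ih =>
      intro x hx hfin hcard i hxi hFxi
      obtain ⟨a, ha, j, hxj, haj, hFaj, hsub⟩ := step x hx i hxi hFxi
      have hfin' : {k : ℕ | a k = 0}.Finite :=
        hfin.subset (hsub.trans Set.diff_subset)
      refine ih a ha hfin' ?_ j haj hFaj
      have h1 : hfin'.toFinset ⊆ hfin.toFinset.erase j := by
        intro k hk
        have hk' := hfin'.mem_toFinset.mp hk
        have h2 := hsub hk'
        exact Finset.mem_erase.mpr ⟨by simpa using h2.2, hfin.mem_toFinset.mpr h2.1⟩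
      calc hfin'.toFinset.card ≤ (hfin.toFinset.erase j).card := Finset.card_le_card h1
        _ = hfin.toFinset.card - 1 :=
            Finset.card_erase_of_mem (hfin.mem_toFinset.mpr hxj)
        _ ≤ n := by omega
  intro x hx hfin i hi
  exact key hfin.toFinset.card x hx hfin le_rfl i (by simpa using hi)
end
end

section
/- Let F : B → B be a non-expansive bijection of the unit ball of c onto itself. Then there exist a bijection σ : ℕ → ℕ and a sequence α : ℕ → {−1, 1} which is eventually constant, such that for every x ∈ B and n ∈ ℕ: if x_n = 0 then F(x)_{σ(n)} = 0; if x_n < 0 then α_n · F(x)_{σ(n)} ≤ 0; and if x_n > 0 then α_n · F(x)_{σ(n)} ≥ 0. -/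
open Filter Topology Metric Set ENNReal
set_option synthInstance.maxHeartbeats 400000
set_option maxHeartbeats 1000000

noncomputable section

def Lmk (f : ℕ → ℝ) (hf : ∀ n, |f n| ≤ 1) : Linf :=
  ⟨f, memℓp_infty ⟨1, by rintro y ⟨n, rfl⟩; simpa [Real.norm_eq_abs] using hf n⟩⟩
@[simp] lemma Lmk_apply (f : ℕ → ℝ) (hf) (n : ℕ) : (Lmk f hf) n = f n := rfl
lemma coord_le_norm (x : Linf) (n : ℕ) : |x n| ≤ ‖x‖ := by
  simpa [Real.norm_eq_abs] using lp.norm_apply_le_norm (by norm_num : (∞ : ℝ≥0∞) ≠ 0) x n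
lemma norm_le_coords (x : Linf) (C : ℝ) (h : ∀ n, |x n| ≤ C) : ‖x‖ ≤ C :=
  lp.norm_le_of_forall_le' C (by simpa [Real.norm_eq_abs] using h)
lemma sub_coord (x y : Linf) (n : ℕ) : (x - y) n = x n - y n := by
  rw [lp.coeFn_sub]; rfl
lemma smul_coord (c : ℝ) (x : Linf) (n : ℕ) : (c • x) n = c * x n := by
  rw [lp.coeFn_smul]; rfl
lemma Linf_ext {x y : Linf} (h : ∀ n, x n = y n) : x = y := lp.ext (funext h)

/-- sign patterns: eventually constant ±1 sequences -/
def IsPat (s : ℕ → ℝ) : Prop :=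
  (∀ n, s n = 1 ∨ s n = -1) ∧ ∃ N, ∀ m ≥ N, s m = s N

lemma IsPat.abs {s} (hs : IsPat s) (n : ℕ) : |s n| = 1 := by
  rcases hs.1 n with h | h <;> rw [h] <;> norm_num

lemma IsPat.abs_le {s} (hs : IsPat s) (n : ℕ) : |s n| ≤ 1 := le_of_eq (hs.abs n)

lemma IsPat.ne_zero {s} (hs : IsPat s) (n : ℕ) : s n ≠ 0 := by
  rcases hs.1 n with h | h <;> rw [h] <;> norm_num

lemma IsPat.tendsto {s} (hs : IsPat s) : ∃ l : ℝ, Tendsto s atTop (𝓝 l) := by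
  obtain ⟨N, hN⟩ := hs.2
  refine ⟨s N, ?_⟩
  refine Tendsto.congr' (f₁ := fun _ => s N) ?_ tendsto_const_nhds
  filter_upwards [eventually_ge_atTop N] with m hm
  exact (hN m hm).symm

def emb (s : ℕ → ℝ) (hs : IsPat s) : Linf := Lmk s hs.abs_le

@[simp] lemma emb_apply {s} (hs : IsPat s) (n : ℕ) : emb s hs n = s n := rfl

lemma emb_mem_Bc {s} (hs : IsPat s) : emb s hs ∈ Bc := by
  refine ⟨norm_le_coords _ 1 (fun n => hs.abs_le n), ?_⟩
  simpa using hs.tendsto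

lemma emb_inj {s t} (hs : IsPat s) (ht : IsPat t) (h : emb s hs = emb t ht) : s = t := by
  funext n
  have := congrArg (fun (z : Linf) => z n) h
  simpa using this


/-- flip at one coordinate -/
def flp (p : ℕ) (s : ℕ → ℝ) : ℕ → ℝ := fun m => if m = p then -s m else s m

lemma flp_apply_self (p : ℕ) (s : ℕ → ℝ) : flp p s p = -s p := by simp [flp]
lemma flp_apply_ne (p : ℕ) (s : ℕ → ℝ) {m : ℕ} (h : m ≠ p) : flp p s m = s m := by
  simp [flp, h]

lemma IsPat.flp_pat {s} (hs : IsPat s) (p : ℕ) : IsPat (flp p s) := by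
  constructor
  · intro n
    by_cases hn : n = p
    · subst hn; rcases hs.1 n with h | h <;> simp [flp, h]
    · rcases hs.1 n with h | h <;> simp [flp, hn, h]
  · obtain ⟨N, hN⟩ := hs.2
    refine ⟨max N (p + 1), fun m hm => ?_⟩
    have h1 : N ≤ m := le_trans (le_max_left _ _) hm
    have h2 : p + 1 ≤ m := le_trans (le_max_right _ _) hm
    have h1' : N ≤ max N (p+1) := le_max_left _ _
    have hmp : m ≠ p := by omega
    have hMp : max N (p+1) ≠ p := by
      have := le_max_right N (p+1); omega
    rw [flp_apply_ne p s hmp, flp_apply_ne p s hMp, hN m h1, hN _ h1']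

lemma IsPat.neg_pat {s} (hs : IsPat s) : IsPat (fun n => -s n) := by
  constructor
  · intro n; rcases hs.1 n with h | h <;> simp [h]
  · obtain ⟨N, hN⟩ := hs.2
    exact ⟨N, fun m hm => by simp [hN m hm]⟩

@[simp] lemma flp_flp (p : ℕ) (s : ℕ → ℝ) : flp p (flp p s) = s := by
  funext m; by_cases h : m = p <;> simp [flp, h]

lemma flp_comm (p q : ℕ) (s : ℕ → ℝ) : flp p (flp q s) = flp q (flp p s) := by
  funext m; simp only [flp]; split_ifs <;> simp_all

lemma flp_neg (p : ℕ) (s : ℕ → ℝ) : flp p (fun n => -s n) = fun n => -(flp p s n) := by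
  funext m; by_cases h : m = p <;> simp [flp, h]

lemma flp_eq_flp {s : ℕ → ℝ} (hs : ∀ n, s n ≠ 0) {p q : ℕ} (h : flp p s = flp q s) :
    p = q := by
  by_contra hpq
  have := congrFun h p
  rw [flp_apply_self, flp_apply_ne q s hpq] at this
  exact hs p (by linarith)

def onePat : ℕ → ℝ := fun _ => 1
lemma isPat_one : IsPat onePat := ⟨fun _ => Or.inl rfl, 0, fun _ _ => rfl⟩

attribute [local instance] Classical.propDecidable

/-- inverse map -/
def G (F : Linf → Linf) (hbij : Set.BijOn F Bc Bc) : Linf → Linf := fun y =>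
  if h : y ∈ Bc then (hbij.surjOn h).choose else 0

variable {F : Linf → Linf} {hbij : Set.BijOn F Bc Bc}

lemma G_mem (F : Linf → Linf) (hbij : Set.BijOn F Bc Bc) {y : Linf} (hy : y ∈ Bc) : G F hbij y ∈ Bc := by
  rw [G, dif_pos hy]
  exact (hbij.surjOn hy).choose_spec.1

lemma FG (F : Linf → Linf) (hbij : Set.BijOn F Bc Bc) {y : Linf} (hy : y ∈ Bc) : F (G F hbij y) = y := by
  rw [G, dif_pos hy]
  exact (hbij.surjOn hy).choose_spec.2

lemma GF (F : Linf → Linf) (hbij : Set.BijOn F Bc Bc) {x : Linf} (hx : x ∈ Bc) : G F hbij (F x) = x := by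
  have h1 : F x ∈ Bc := hbij.mapsTo hx
  exact hbij.injOn (G_mem F hbij h1) hx (FG F hbij h1)

lemma F_inj (F : Linf → Linf) (hbij : Set.BijOn F Bc Bc) {x y : Linf}
    (hx : x ∈ Bc) (hy : y ∈ Bc) (h : F x = F y) : x = y :=
  hbij.injOn hx hy h

lemma Bc_norm {x : Linf} (hx : x ∈ Bc) : ‖x‖ ≤ 1 := hx.1
lemma Bc_coord {x : Linf} (hx : x ∈ Bc) (n : ℕ) : |x n| ≤ 1 :=
  le_trans (coord_le_norm x n) hx.1

lemma F_zero (F : Linf → Linf) (hbij : Set.BijOn F Bc Bc)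
    (hne : ∀ a ∈ Bc, ∀ b ∈ Bc, ‖F a - F b‖ ≤ ‖a - b‖) : F 0 = 0 := by
  have h0 : (0 : Linf) ∈ Bc := by
    constructor
    · simp
    · exact ⟨0, by simpa using tendsto_const_nhds⟩
  have ha : F 0 ∈ Bc := hbij.mapsTo h0
  -- ∀ y ∈ Bc, ‖y - F 0‖ ≤ 1
  have key : ∀ y ∈ Bc, ‖y - F 0‖ ≤ 1 := by
    intro y hy
    have h1 : F (G F hbij y) = y := FG F hbij hy
    have h2 : G F hbij y ∈ Bc := G_mem F hbij hy
    have := hne _ h2 _ h0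
    rw [h1] at this
    calc ‖y - F 0‖ ≤ ‖G F hbij y - 0‖ := this
      _ = ‖G F hbij y‖ := by rw [sub_zero]
      _ ≤ 1 := Bc_norm h2
  have hone := key _ (emb_mem_Bc isPat_one)
  have hmone := key _ (emb_mem_Bc isPat_one.neg_pat)
  refine Linf_ext fun n => ?_
  have c1 : |1 - F 0 n| ≤ 1 := by
    have := coord_le_norm (emb onePat isPat_one - F 0) n
    rw [sub_coord] at this
    simpa [onePat] using le_trans this hone
  have c2 : |(-1 : ℝ) - F 0 n| ≤ 1 := by
    have := coord_le_norm (emb _ isPat_one.neg_pat - F 0) n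
    rw [sub_coord] at this
    simpa [onePat] using le_trans this hmone
  have : (0:Linf) n = 0 := by
    have : ((0:Linf) : ∀ _ : ℕ, ℝ) = 0 := lp.coeFn_zero _ _
    rw [this]; rfl
  rw [this]
  rw [abs_le] at c1 c2
  linarith [c1.1, c1.2, c2.1, c2.2]

/-- key pinning lemma -/
lemma pin (F : Linf → Linf) (hbij : Set.BijOn F Bc Bc)
    (hne : ∀ a ∈ Bc, ∀ b ∈ Bc, ‖F a - F b‖ ≤ ‖a - b‖)
    {e f : ℕ → ℝ} (he : IsPat e) (hf : IsPat f) {x : Linf} (hx : x ∈ Bc)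
    (h1 : ‖x - G F hbij (emb e he)‖ ≤ 1/2)
    (h2 : ‖x - G F hbij (emb f hf)‖ ≤ 3/2)
    {j : ℕ} (hj : f j = - e j) : F x j = e j / 2 := by
  have hae : G F hbij (emb e he) ∈ Bc := G_mem F hbij (emb_mem_Bc he)
  have haf : G F hbij (emb f hf) ∈ Bc := G_mem F hbij (emb_mem_Bc hf)
  have k1 : ‖F x - emb e he‖ ≤ 1/2 := by
    have h := hne _ hx _ hae
    rw [FG F hbij (emb_mem_Bc he)] at h
    exact h.trans h1
  have k2 : ‖F x - emb f hf‖ ≤ 3/2 := by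
    have h := hne _ hx _ haf
    rw [FG F hbij (emb_mem_Bc hf)] at h
    exact h.trans h2
  have c1 : |F x j - e j| ≤ 1/2 := by
    have := coord_le_norm (F x - emb e he) j
    rw [sub_coord] at this
    simpa using this.trans k1
  have c2 : |F x j + e j| ≤ 3/2 := by
    have := coord_le_norm (F x - emb f hf) j
    rw [sub_coord] at this
    simp only [emb_apply, hj] at this
    have h' := this.trans k2
    rwa [sub_neg_eq_add] at h'
  rw [abs_le] at c1 c2
  rcases he.1 j with h | h <;> rw [h] at c1 c2 ⊢ <;> linarith [c1.1, c1.2, c2.1, c2.2]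

/-- Step A : G maps extreme points to extreme points -/
lemma stepA (F : Linf → Linf) (hbij : Set.BijOn F Bc Bc)
    (hne : ∀ a ∈ Bc, ∀ b ∈ Bc, ‖F a - F b‖ ≤ ‖a - b‖)
    {e : ℕ → ℝ} (he : IsPat e) :
    IsPat (fun j => G F hbij (emb e he) j) := by
  set a : Linf := G F hbij (emb e he) with ha_def
  have ha : a ∈ Bc := G_mem F hbij (emb_mem_Bc he)
  have ha' : G F hbij (emb _ he.neg_pat) ∈ Bc := G_mem F hbij (emb_mem_Bc he.neg_pat)
  have habs : ∀ N, |a N| = 1 := by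
    intro N
    by_contra hN
    have hlt : |a N| < 1 := lt_of_le_of_ne (Bc_coord ha N) hN
    set ε := (1 - |a N|)/2 with hε_def
    have hε : 0 < ε := by simp only [hε_def]; linarith
    have hbd : ∀ j, |(if j = N then a N/2 + ε else a j / 2)| ≤ 1 := by
      intro j
      by_cases hj : j = N
      · subst hj
        rw [if_pos rfl]
        have key : |a j / 2 + ε| ≤ |a j|/2 + ε := by
          refine (abs_add_le _ _).trans ?_
          rw [abs_div, abs_two, abs_of_pos hε]
        have h0 := abs_nonneg (a j)
        linarith
      · simp only [if_neg hj]
        rw [abs_div]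
        simp only [abs_two]
        linarith [Bc_coord ha j]
    set x : Linf := (1/2 : ℝ) • a with hx_def
    set x' : Linf := Lmk _ hbd with hx'_def
    have hx_coord : ∀ j, x j = a j / 2 := by
      intro j; rw [hx_def, smul_coord]; ring
    have hx'_coord : ∀ j, x' j = if j = N then a N/2 + ε else a j / 2 := fun j => rfl
    have hxBc : x ∈ Bc := by
      constructor
      · refine norm_le_coords _ 1 fun n => ?_
        rw [hx_coord]
        rw [abs_div, abs_two]
        linarith [Bc_coord ha n]
      · obtain ⟨l, hl⟩ := ha.2
        refine ⟨l/2, ?_⟩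
        have : (fun n => x n) = fun n => a n * (1/2) := by
          funext n; rw [hx_coord]; ring
        rw [this]
        convert hl.mul_const (1/2) using 2
        ring
    have hx'Bc : x' ∈ Bc := by
      constructor
      · exact norm_le_coords _ 1 fun n => by rw [hx'_coord]; exact hbd n
      · obtain ⟨l, hl⟩ := ha.2
        refine ⟨l/2, ?_⟩
        have heq : (fun n => x n) =ᶠ[atTop] (fun n => x' n) := by
          filter_upwards [eventually_ge_atTop (N+1)] with m hm
          rw [hx_coord, hx'_coord, if_neg (by omega)]
        refine Tendsto.congr' heq ?_
        have : (fun n => x n) = fun n => a n * (1/2) := by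
          funext n; rw [hx_coord]; ring
        rw [this]
        convert hl.mul_const (1/2) using 2
        ring
    -- pinning hypotheses for x
    have pair1x : ‖x - G F hbij (emb e he)‖ ≤ 1/2 := by
      refine norm_le_coords _ _ fun n => ?_
      rw [sub_coord, hx_coord, ← ha_def]
      have : a n / 2 - a n = -(a n/2) := by ring
      rw [this, abs_neg, abs_div, abs_two]
      linarith [Bc_coord ha n]
    have pair2x : ‖x - G F hbij (emb _ he.neg_pat)‖ ≤ 3/2 := by
      refine norm_le_coords _ _ fun n => ?_
      rw [sub_coord, hx_coord]
      refine (abs_sub _ _).trans ?_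
      rw [abs_div, abs_two]
      linarith [Bc_coord ha n, Bc_coord ha' n]
    have pair1x' : ‖x' - G F hbij (emb e he)‖ ≤ 1/2 := by
      refine norm_le_coords _ _ fun n => ?_
      rw [sub_coord, hx'_coord, ← ha_def]
      by_cases hn : n = N
      · subst hn
        rw [if_pos rfl]
        have heq : a n/2 + ε - a n = ε - a n/2 := by ring
        rw [heq]
        refine (abs_sub _ _).trans ?_
        rw [abs_of_pos hε, abs_div, abs_two, hε_def]
        linarith
      · rw [if_neg hn]
        have : a n / 2 - a n = -(a n/2) := by ring
        rw [this, abs_neg, abs_div, abs_two]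
        linarith [Bc_coord ha n]
    have pair2x' : ‖x' - G F hbij (emb _ he.neg_pat)‖ ≤ 3/2 := by
      refine norm_le_coords _ _ fun n => ?_
      rw [sub_coord, hx'_coord]
      refine (abs_sub _ _).trans ?_
      have : |(if n = N then a N/2 + ε else a n/2)| ≤ 1/2 := by
        by_cases hn : n = N
        · rw [if_pos hn]
          refine (abs_add_le _ _).trans ?_
          rw [abs_of_pos hε, abs_div, abs_two, hε_def]
          linarith
        · rw [if_neg hn, abs_div, abs_two]
          linarith [Bc_coord ha n]
      linarith [Bc_coord ha' n]
    have hmj : ∀ j : ℕ, (fun n => -e n) j = - e j := fun j => rfl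
    have pinx : ∀ j, F x j = e j / 2 := fun j =>
      pin F hbij hne he he.neg_pat hxBc pair1x pair2x (hmj j)
    have pinx' : ∀ j, F x' j = e j / 2 := fun j =>
      pin F hbij hne he he.neg_pat hx'Bc pair1x' pair2x' (hmj j)
    have hxx : x = x' := F_inj F hbij hxBc hx'Bc (Linf_ext fun j => by rw [pinx j, pinx' j])
    have hNN : x N = x' N := by rw [hxx]
    rw [hx_coord N, hx'_coord N, if_pos rfl] at hNN
    linarith
  constructor
  · intro n
    rcases (abs_eq (by norm_num : (0:ℝ) ≤ 1)).mp (habs n) with h | h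
    · exact Or.inl h
    · exact Or.inr h
  · -- eventually constant
    obtain ⟨l, hl⟩ := ha.2
    obtain ⟨N, hN⟩ := Metric.tendsto_atTop.mp hl 1 one_pos
    refine ⟨N, fun m hm => ?_⟩
    show (a m : ℝ) = a N
    have d1 := hN m hm
    have d2 := hN N (le_refl N)
    rw [Real.dist_eq] at d1 d2
    have habsm := habs m
    have habsN := habs N
    rw [abs_lt] at d1 d2
    rcases (abs_eq (by norm_num : (0:ℝ) ≤ 1)).mp habsm with h1 | h1 <;>
      rcases (abs_eq (by norm_num : (0:ℝ) ≤ 1)).mp habsN with h2 | h2 <;>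
      rw [h1] at d1 ⊢ <;> rw [h2] at d2 ⊢ <;>
      first
        | rfl
        | (exfalso; linarith [d1.1, d1.2, d2.1, d2.2])

/-- oddness of G on extreme points -/
lemma G_neg (F : Linf → Linf) (hbij : Set.BijOn F Bc Bc)
    (hne : ∀ a ∈ Bc, ∀ b ∈ Bc, ‖F a - F b‖ ≤ ‖a - b‖)
    {e : ℕ → ℝ} (he : IsPat e) (m : ℕ) :
    G F hbij (emb _ he.neg_pat) m = - G F hbij (emb e he) m := by
  set a : Linf := G F hbij (emb e he) with ha_def
  set a' : Linf := G F hbij (emb _ he.neg_pat) with ha'_def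
  have ha : a ∈ Bc := G_mem F hbij (emb_mem_Bc he)
  have ha' : a' ∈ Bc := G_mem F hbij (emb_mem_Bc he.neg_pat)
  have hpa : IsPat (fun j => a j) := stepA F hbij hne he
  have hpa' : IsPat (fun j => a' j) := stepA F hbij hne he.neg_pat
  by_contra hcon
  -- then a' m = a m
  have heq : a' m = a m := by
    have h1 := hpa.1 m; have h2 := hpa'.1 m
    simp only at h1 h2
    by_contra hne2
    apply hcon
    rcases h1 with h1 | h1 <;> rcases h2 with h2 | h2 <;>
      rw [h1, h2] at hne2 ⊢ <;> simp_all
  have habs : ∀ j, |a j| = 1 := fun j => hpa.abs j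
  have habs' : ∀ j, |a' j| = 1 := fun j => hpa'.abs j
  have hbd : ∀ j, |(if j = m then a m else a j / 2)| ≤ 1 := by
    intro j
    by_cases hj : j = m
    · rw [if_pos hj, habs m]
    · rw [if_neg hj, abs_div, abs_two, habs j]
      norm_num
  set x : Linf := (1/2 : ℝ) • a with hx_def
  set x' : Linf := Lmk _ hbd with hx'_def
  have hx_coord : ∀ j, x j = a j / 2 := by
    intro j; rw [hx_def, smul_coord]; ring
  have hx'_coord : ∀ j, x' j = if j = m then a m else a j / 2 := fun j => rfl
  have hxBc : x ∈ Bc := by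
    constructor
    · refine norm_le_coords _ 1 fun n => ?_
      rw [hx_coord, abs_div, abs_two, habs n]
      try norm_num
    · obtain ⟨l, hl⟩ := ha.2
      refine ⟨l/2, ?_⟩
      have : (fun n => x n) = fun n => a n * (1/2) := by
        funext n; rw [hx_coord]; ring
      rw [this]
      convert hl.mul_const (1/2) using 2
      ring
  have hx'Bc : x' ∈ Bc := by
    constructor
    · exact norm_le_coords _ 1 fun n => by rw [hx'_coord]; exact hbd n
    · obtain ⟨l, hl⟩ := ha.2
      refine ⟨l/2, ?_⟩
      have heq2 : (fun n => x n) =ᶠ[atTop] (fun n => x' n) := by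
        filter_upwards [eventually_ge_atTop (m+1)] with j hj
        rw [hx_coord, hx'_coord, if_neg (by omega)]
      refine Tendsto.congr' heq2 ?_
      have : (fun n => x n) = fun n => a n * (1/2) := by
        funext n; rw [hx_coord]; ring
      rw [this]
      convert hl.mul_const (1/2) using 2
      ring
  have pair1x : ‖x - a‖ ≤ 1/2 := by
    refine norm_le_coords _ _ fun n => ?_
    rw [sub_coord, hx_coord]
    have h' : a n / 2 - a n = -(a n/2) := by ring
    rw [h', abs_neg, abs_div, abs_two, habs n]
    try norm_num
  have pair2x : ‖x - a'‖ ≤ 3/2 := by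
    refine norm_le_coords _ _ fun n => ?_
    rw [sub_coord, hx_coord]
    refine (abs_sub _ _).trans ?_
    rw [abs_div, abs_two, habs n, habs' n]
    try norm_num
  have pair1x' : ‖x' - a‖ ≤ 1/2 := by
    refine norm_le_coords _ _ fun n => ?_
    rw [sub_coord, hx'_coord]
    by_cases hn : n = m
    · subst hn; rw [if_pos rfl]; simp
    · rw [if_neg hn]
      have h' : a n / 2 - a n = -(a n/2) := by ring
      rw [h', abs_neg, abs_div, abs_two, habs n]
      try norm_num
  have pair2x' : ‖x' - a'‖ ≤ 3/2 := by
    refine norm_le_coords _ _ fun n => ?_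
    rw [sub_coord, hx'_coord]
    by_cases hn : n = m
    · subst hn; rw [if_pos rfl, heq]
      norm_num
    · rw [if_neg hn]
      refine (abs_sub _ _).trans ?_
      rw [abs_div, abs_two, habs n, habs' n]
      try norm_num
  have hmj : ∀ j : ℕ, (fun n => -e n) j = - e j := fun j => rfl
  have pinx : ∀ j, F x j = e j / 2 := fun j =>
    pin F hbij hne he he.neg_pat hxBc pair1x pair2x (hmj j)
  have pinx' : ∀ j, F x' j = e j / 2 := fun j =>
    pin F hbij hne he he.neg_pat hx'Bc pair1x' pair2x' (hmj j)
  have hxx : x = x' := F_inj F hbij hxBc hx'Bc (Linf_ext fun j => by rw [pinx j, pinx' j])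
  have hmm : x m = x' m := by rw [hxx]
  rw [hx_coord m, hx'_coord m, if_pos rfl] at hmm
  have hzero : a m = 0 := by linarith
  have hfin := habs m
  rw [hzero] at hfin
  norm_num at hfin

/-- clamp to [0,1/2] -/
def c01 (u : ℝ) : ℝ := max 0 (min u (1/2))

lemma c01_mem (u : ℝ) : 0 ≤ c01 u ∧ c01 u ≤ 1/2 := by
  refine ⟨le_max_left _ _, ?_⟩
  rw [c01, max_le_iff]
  exact ⟨by norm_num, min_le_right _ _⟩

lemma c01_eq {u : ℝ} (h0 : 0 ≤ u) (h1 : u ≤ 1/2) : c01 u = u := by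
  rw [c01, min_eq_left h1, max_eq_right h0]

lemma c01_lip (u v : ℝ) : |c01 u - c01 v| ≤ |u - v| := by
  rw [c01, c01, max_comm 0 (min u (1/2)), max_comm 0 (min v (1/2))]
  refine (abs_max_sub_max_le_abs _ _ _).trans ?_
  refine le_trans (le_of_eq rfl) ?_
  have := abs_min_sub_min_le_max u (1/2) v (1/2)
  simpa using this

lemma mid_mem_uIcc (a b : ℝ) : (a + b)/2 ∈ Set.uIcc a b := by
  rcases le_total a b with h | h
  · rw [Set.uIcc_of_le h]; constructor <;> [linarith; linarith]
  · rw [Set.uIcc_of_ge h]; constructor <;> [linarith; linarith]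

lemma pm_cases {x y : ℝ} (h1 : x = 1 ∨ x = -1) (h2 : y = 1 ∨ y = -1) : y = x ∨ y = -x := by
  rcases h1 with h1 | h1 <;> rcases h2 with h2 | h2 <;> rw [h1, h2] <;> norm_num

/-- adjacency: G of a single flip is a single flip -/
lemma adjacent (F : Linf → Linf) (hbij : Set.BijOn F Bc Bc)
    (hne : ∀ a ∈ Bc, ∀ b ∈ Bc, ‖F a - F b‖ ≤ ‖a - b‖)
    {e : ℕ → ℝ} (he : IsPat e) (n : ℕ) :
    ∃ p, ∀ j, G F hbij (emb _ (he.flp_pat n)) j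
      = flp p (fun i => G F hbij (emb e he) i) j := by
  set A : Linf := G F hbij (emb e he) with hA_def
  set B : Linf := G F hbij (emb _ (he.flp_pat n)) with hB_def
  have hApat : IsPat (fun j => A j) := stepA F hbij hne he
  have hBpat : IsPat (fun j => B j) := stepA F hbij hne (he.flp_pat n)
  have hAne : ∀ j, (A j : ℝ) ≠ 0 := fun j => hApat.ne_zero j
  have habsA : ∀ j, |A j| = 1 := fun j => hApat.abs j
  have habsB : ∀ j, |B j| = 1 := fun j => hBpat.abs j
  -- they differ somewhere
  have hdiff : ∃ p, B p ≠ A p := by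
    by_contra hall
    push_neg at hall
    have : B = A := Linf_ext hall
    rw [hA_def, hB_def] at this
    have h2 := congrArg F this
    rw [FG F hbij (emb_mem_Bc (he.flp_pat n)), FG F hbij (emb_mem_Bc he)] at h2
    have h3 := emb_inj _ _ h2
    have h4 := congrFun h3 n
    rw [flp_apply_self] at h4
    exact he.ne_zero n (by linarith)
  obtain ⟨p, hp⟩ := hdiff
  have hpneg : B p = - A p := by
    have := pm_cases (hApat.1 p) (hBpat.1 p)
    simp only at this
    exact this.resolve_left hp
  refine ⟨p, fun j => ?_⟩
  by_cases hjp : j = p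
  · subst hjp; rw [flp_apply_self]; exact hpneg
  · rw [flp_apply_ne _ _ hjp]
    -- suppose not : B j = - A j , run the IVT argument with q := j
    by_contra hq
    set q := j with hq_def
    have hqp : q ≠ p := hjp
    have hqneg : B q = - A q := by
      have := pm_cases (hApat.1 q) (hBpat.1 q)
      simp only at this
      exact this.resolve_left hq
    -- the two-parameter family
    have hbd : ∀ u v : ℝ, ∀ i : ℕ,
        |(if i = p then (1 - c01 u) * A p else if i = q then (1 - c01 v) * A q else A i / 2)| ≤ 1 := by
      intro u v i
      rcases c01_mem u with ⟨hu0, hu1⟩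
      rcases c01_mem v with ⟨hv0, hv1⟩
      by_cases hip : i = p
      · rw [if_pos hip, abs_mul, habsA, mul_one, abs_of_nonneg (by linarith)]
        linarith
      · rw [if_neg hip]
        by_cases hiq : i = q
        · rw [if_pos hiq, abs_mul, habsA, mul_one, abs_of_nonneg (by linarith)]
          linarith
        · rw [if_neg hiq, abs_div, abs_two, habsA]
          norm_num
    set xf : ℝ → ℝ → Linf := fun u v => Lmk _ (hbd u v) with hxf_def
    have hxcoord : ∀ u v i, xf u v i
        = (if i = p then (1 - c01 u) * A p else if i = q then (1 - c01 v) * A q else A i / 2) :=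
      fun u v i => rfl
    have hxBc : ∀ u v, xf u v ∈ Bc := by
      intro u v
      constructor
      · exact norm_le_coords _ 1 fun i => hbd u v i
      · have hA_Bc : A ∈ Bc := G_mem F hbij (emb_mem_Bc he)
        obtain ⟨l, hl⟩ := hA_Bc.2
        refine ⟨l/2, ?_⟩
        have heq2 : (fun i => A i * (1/2)) =ᶠ[atTop] (fun i => xf u v i) := by
          filter_upwards [eventually_ge_atTop (max p q + 1)] with i hi
          have hip : i ≠ p := by
            have := le_max_left p q; omega
          have hiq : i ≠ q := by
            have := le_max_right p q; omega
          rw [hxcoord, if_neg hip, if_neg hiq]; ring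
        refine Tendsto.congr' heq2 ?_
        convert hl.mul_const (1/2) using 2
        ring
    -- pinning hypotheses
    have hnegf : IsPat (fun i => -(flp n e i)) := (he.flp_pat n).neg_pat
    have hGneg : ∀ i, G F hbij (emb _ hnegf) i = - B i := fun i => G_neg F hbij hne (he.flp_pat n) i
    have pair1 : ∀ u v, ‖xf u v - A‖ ≤ 1/2 := by
      intro u v
      rcases c01_mem u with ⟨hu0, hu1⟩
      rcases c01_mem v with ⟨hv0, hv1⟩
      refine norm_le_coords _ _ fun i => ?_
      rw [sub_coord, hxcoord]
      by_cases hip : i = p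
      · subst hip; rw [if_pos rfl]
        have : (1 - c01 u) * A i - A i = -(c01 u * A i) := by ring
        rw [this, abs_neg, abs_mul, habsA, mul_one, abs_of_nonneg hu0]
        exact hu1
      · rw [if_neg hip]
        by_cases hiq : i = q
        · subst hiq; rw [if_pos rfl]
          have : (1 - c01 v) * A i - A i = -(c01 v * A i) := by ring
          rw [this, abs_neg, abs_mul, habsA, mul_one, abs_of_nonneg hv0]
          exact hv1
        · rw [if_neg hiq]
          have : A i / 2 - A i = -(A i / 2) := by ring
          rw [this, abs_neg, abs_div, abs_two, habsA]
    have pair2 : ∀ u v, ‖xf u v - G F hbij (emb _ hnegf)‖ ≤ 3/2 := by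
      intro u v
      rcases c01_mem u with ⟨hu0, hu1⟩
      rcases c01_mem v with ⟨hv0, hv1⟩
      refine norm_le_coords _ _ fun i => ?_
      rw [sub_coord, hxcoord, hGneg i, sub_neg_eq_add]
      by_cases hip : i = p
      · subst hip; rw [if_pos rfl, hpneg]
        have : (1 - c01 u) * A i + -A i = -(c01 u * A i) := by ring
        rw [this, abs_neg, abs_mul, habsA, mul_one, abs_of_nonneg hu0]
        linarith
      · rw [if_neg hip]
        by_cases hiq : i = q
        · subst hiq; rw [if_pos rfl, hqneg]
          have : (1 - c01 v) * A i + -A i = -(c01 v * A i) := by ring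
          rw [this, abs_neg, abs_mul, habsA, mul_one, abs_of_nonneg hv0]
          linarith
        · rw [if_neg hiq]
          refine (abs_add_le _ _).trans ?_
          rw [abs_div, abs_two, habsA, habsB]
          norm_num
    -- the pinned coordinates of the image
    have hpin : ∀ u v, ∀ i, i ≠ n → F (xf u v) i = e i / 2 := by
      intro u v i hin
      have hji : (fun i => -(flp n e i)) i = - e i := by
        simp only [neg_inj]
        exact flp_apply_ne n e hin
      exact pin F hbij hne he hnegf (hxBc u v) (pair1 u v) (pair2 u v) hji
    set φ : ℝ → ℝ → ℝ := fun u v => F (xf u v) n with hφ_def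
    -- injectivity of φ on the square
    have hxinj : ∀ u v u' v', φ u v = φ u' v' → xf u v = xf u' v' := by
      intro u v u' v' hφeq
      refine F_inj F hbij (hxBc u v) (hxBc u' v') (Linf_ext fun i => ?_)
      by_cases hin : i = n
      · subst hin; exact hφeq
      · rw [hpin u v i hin, hpin u' v' i hin]
    have hcinj : ∀ u v u' v', φ u v = φ u' v' → c01 u = c01 u' ∧ c01 v = c01 v' := by
      intro u v u' v' hφeq
      have hx := hxinj u v u' v' hφeq
      constructor
      · have h0 : xf u v p = xf u' v' p := by rw [hx]
        rw [hxcoord u v p, hxcoord u' v' p, if_pos rfl, if_pos rfl] at h0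
        have hcan := mul_right_cancel₀ (hAne p) h0
        linarith
      · have h0 : xf u v q = xf u' v' q := by rw [hx]
        rw [hxcoord u v q, hxcoord u' v' q, if_neg hqp, if_neg hqp,
          if_pos rfl, if_pos rfl] at h0
        have hcan := mul_right_cancel₀ (hAne q) h0
        linarith
    -- Lipschitz continuity of the legs
    have hlip : ∀ u v u' v', |φ u v - φ u' v'| ≤ |u - u'| + |v - v'| := by
      intro u v u' v'
      have h1 : |φ u v - φ u' v'| ≤ ‖F (xf u v) - F (xf u' v')‖ := by
        have := coord_le_norm (F (xf u v) - F (xf u' v')) n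
        rw [sub_coord] at this
        exact this
      refine h1.trans ?_
      refine (hne _ (hxBc u v) _ (hxBc u' v')).trans ?_
      refine norm_le_coords _ _ fun i => ?_
      rw [sub_coord, hxcoord, hxcoord]
      by_cases hip : i = p
      · rw [if_pos hip, if_pos hip]
        have heq3 : (1 - c01 u) * A p - (1 - c01 u') * A p = (c01 u' - c01 u) * A p := by ring
        rw [heq3, abs_mul, habsA, mul_one]
        have := c01_lip u' u
        rw [abs_sub_comm u' u] at this
        have h2 := abs_nonneg (v - v')
        linarith
      · rw [if_neg hip, if_neg hip]
        by_cases hiq : i = q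
        · rw [if_pos hiq, if_pos hiq]
          have heq3 : (1 - c01 v) * A q - (1 - c01 v') * A q = (c01 v' - c01 v) * A q := by ring
          rw [heq3, abs_mul, habsA, mul_one]
          have := c01_lip v' v
          rw [abs_sub_comm v' v] at this
          have h2 := abs_nonneg (u - u')
          linarith
        · rw [if_neg hiq, if_neg hiq]
          simp only [sub_self, abs_zero]
          positivity
    have hcont1 : ∀ v, ContinuousOn (fun u => φ u v) (Set.uIcc 0 (1/2)) := by
      intro v
      refine (LipschitzWith.continuous (K := 1) ?_).continuousOn
      refine LipschitzWith.of_dist_le_mul fun a b => ?_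
      rw [Real.dist_eq, Real.dist_eq, NNReal.coe_one, one_mul]
      have := hlip a v b v
      simpa using this
    have hcont2 : ∀ u, ContinuousOn (fun v => φ u v) (Set.uIcc 0 (1/2)) := by
      intro u
      refine (LipschitzWith.continuous (K := 1) ?_).continuousOn
      refine LipschitzWith.of_dist_le_mul fun a b => ?_
      rw [Real.dist_eq, Real.dist_eq, NNReal.coe_one, one_mul]
      have := hlip u a u b
      simpa using this
    -- the endpoints
    set P := φ 0 0 with hP
    set Q := φ (1/2) (1/2) with hQ
    have hPQ : P ≠ Q := by
      intro hPQeq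
      have := hcinj 0 0 (1/2) (1/2) hPQeq
      rw [c01_eq (le_refl 0) (by norm_num), c01_eq (by norm_num) (le_refl (1/2))] at this
      norm_num at this
    set c := (P + Q)/2 with hc
    have hcP : c ≠ P := fun h => hPQ (by rw [hc] at h; linarith)
    have hcQ : c ≠ Q := fun h => hPQ (by rw [hc] at h; linarith)
    -- path 1 : (u,0) then (1/2, v)
    have hcov1 : c ∈ Set.uIcc P (φ (1/2) 0) ∪ Set.uIcc (φ (1/2) 0) Q :=
      Set.uIcc_subset_uIcc_union_uIcc (mid_mem_uIcc P Q)
    have hcov2 : c ∈ Set.uIcc P (φ 0 (1/2)) ∪ Set.uIcc (φ 0 (1/2)) Q :=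
      Set.uIcc_subset_uIcc_union_uIcc (mid_mem_uIcc P Q)
    have huIcc : Set.uIcc (0:ℝ) (1/2) = Set.Icc 0 (1/2) := Set.uIcc_of_le (by norm_num)
    -- extract witnesses
    have hw1 : (∃ u ∈ Set.Icc (0:ℝ) (1/2), φ u 0 = c) ∨ (∃ v ∈ Set.Icc (0:ℝ) (1/2), φ (1/2) v = c) := by
      rcases hcov1 with h | h
      · left
        have := intermediate_value_uIcc (hcont1 0) (a := 0) (b := 1/2) h
        obtain ⟨u, hu, hu2⟩ := this
        exact ⟨u, huIcc ▸ hu, hu2⟩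
      · right
        have := intermediate_value_uIcc (hcont2 (1/2)) (a := 0) (b := 1/2)
        have h2 : c ∈ Set.uIcc (φ (1/2) 0) (φ (1/2) (1/2)) := h
        obtain ⟨v, hv, hv2⟩ := this h2
        exact ⟨v, huIcc ▸ hv, hv2⟩
    have hw2 : (∃ v ∈ Set.Icc (0:ℝ) (1/2), φ 0 v = c) ∨ (∃ u ∈ Set.Icc (0:ℝ) (1/2), φ u (1/2) = c) := by
      rcases hcov2 with h | h
      · left
        have := intermediate_value_uIcc (hcont2 0) (a := 0) (b := 1/2)
        obtain ⟨v, hv, hv2⟩ := this h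
        exact ⟨v, huIcc ▸ hv, hv2⟩
      · right
        have := intermediate_value_uIcc (hcont1 (1/2)) (a := 0) (b := 1/2)
        have h2 : c ∈ Set.uIcc (φ 0 (1/2)) (φ (1/2) (1/2)) := h
        obtain ⟨u, hu, hu2⟩ := this h2
        exact ⟨u, huIcc ▸ hu, hu2⟩
    rcases hw1 with ⟨u1, hu1m, hu1⟩ | ⟨v1, hv1m, hv1⟩ <;>
      rcases hw2 with ⟨v2, hv2m, hv2⟩ | ⟨u2, hu2m, hu2⟩
    · -- φ u1 0 = φ 0 v2 = c
      have := hcinj u1 0 0 v2 (by rw [hu1, hv2])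
      rw [c01_eq hu1m.1 hu1m.2, c01_eq hv2m.1 hv2m.2,
        c01_eq (le_refl 0) (by norm_num)] at this
      apply hcP
      rw [← hu1, this.1, hP]
    · -- φ u1 0 = φ u2 (1/2) = c : second coordinates 0 vs 1/2
      have := hcinj u1 0 u2 (1/2) (by rw [hu1, hu2])
      rw [c01_eq (le_refl 0) (by norm_num), c01_eq (by norm_num) (le_refl (1/2))] at this
      norm_num at this
    · -- φ (1/2) v1 = φ 0 v2 : first coords 1/2 vs 0
      have := hcinj (1/2) v1 0 v2 (by rw [hv1, hv2])
      rw [c01_eq (by norm_num) (le_refl (1/2)), c01_eq (le_refl 0) (by norm_num)] at this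
      norm_num at this
    · -- φ (1/2) v1 = φ u2 (1/2) = c : forces both = Q
      have := hcinj (1/2) v1 u2 (1/2) (by rw [hv1, hu2])
      rw [c01_eq hv1m.1 hv1m.2, c01_eq hu2m.1 hu2m.2,
        c01_eq (by norm_num) (le_refl (1/2))] at this
      apply hcQ
      rw [← hv1, this.2, hQ]

lemma emb_congr {s t : ℕ → ℝ} (hs : IsPat s) (ht : IsPat t) (h : s = t) :
    emb s hs = emb t ht := by subst h; rfl

lemma psi_inj_fun (F : Linf → Linf) (hbij : Set.BijOn F Bc Bc)
    {s t : ℕ → ℝ} (hs : IsPat s) (ht : IsPat t)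
    (h : (fun j => G F hbij (emb s hs) j) = (fun j => G F hbij (emb t ht) j)) : s = t := by
  have h1 : G F hbij (emb s hs) = G F hbij (emb t ht) := Linf_ext (fun n => congrFun h n)
  have h2 := congrArg F h1
  rw [FG F hbij (emb_mem_Bc hs), FG F hbij (emb_mem_Bc ht)] at h2
  exact emb_inj _ _ h2

/-- the coordinate correspondence -/
def sigA (F : Linf → Linf) (hbij : Set.BijOn F Bc Bc)
    (hne : ∀ a ∈ Bc, ∀ b ∈ Bc, ‖F a - F b‖ ≤ ‖a - b‖)
    {e : ℕ → ℝ} (he : IsPat e) (n : ℕ) : ℕ :=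
  (adjacent F hbij hne he n).choose

lemma sigA_spec (F : Linf → Linf) (hbij : Set.BijOn F Bc Bc)
    (hne : ∀ a ∈ Bc, ∀ b ∈ Bc, ‖F a - F b‖ ≤ ‖a - b‖)
    {e : ℕ → ℝ} (he : IsPat e) (n : ℕ) :
    (fun j => G F hbij (emb _ (he.flp_pat n)) j)
      = flp (sigA F hbij hne he n) (fun i => G F hbij (emb e he) i) :=
  funext fun j => (adjacent F hbij hne he n).choose_spec j

lemma sigA_unique (F : Linf → Linf) (hbij : Set.BijOn F Bc Bc)
    (hne : ∀ a ∈ Bc, ∀ b ∈ Bc, ‖F a - F b‖ ≤ ‖a - b‖)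
    {e : ℕ → ℝ} (he : IsPat e) (n : ℕ) (p : ℕ)
    (hp : (fun j => G F hbij (emb _ (he.flp_pat n)) j)
      = flp p (fun i => G F hbij (emb e he) i)) : p = sigA F hbij hne he n := by
  have h2 := sigA_spec F hbij hne he n
  have h3 : flp p (fun i => G F hbij (emb e he) i)
      = flp (sigA F hbij hne he n) (fun i => G F hbij (emb e he) i) := by
    rw [← hp, h2]
  exact flp_eq_flp (fun j => (stepA F hbij hne he).ne_zero j) h3

lemma sigA_congr (F : Linf → Linf) (hbij : Set.BijOn F Bc Bc)
    (hne : ∀ a ∈ Bc, ∀ b ∈ Bc, ‖F a - F b‖ ≤ ‖a - b‖)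
    {e e' : ℕ → ℝ} (he : IsPat e) (he' : IsPat e') (h : e = e') (n : ℕ) :
    sigA F hbij hne he n = sigA F hbij hne he' n := by subst h; rfl

/-- flipping the same coordinate : σ invariant -/
lemma sigA_flip_self (F : Linf → Linf) (hbij : Set.BijOn F Bc Bc)
    (hne : ∀ a ∈ Bc, ∀ b ∈ Bc, ‖F a - F b‖ ≤ ‖a - b‖)
    {e : ℕ → ℝ} (he : IsPat e) (n : ℕ) :
    sigA F hbij hne (he.flp_pat n) n = sigA F hbij hne he n := by
  set p := sigA F hbij hne he n with hp_def
  have hspec := sigA_spec F hbij hne he n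
  -- ψ (flp n (flp n e)) = ψ e = flp p (ψ (flp n e))
  refine (sigA_unique F hbij hne (he.flp_pat n) n p ?_).symm
  have hflfl : emb _ ((he.flp_pat n).flp_pat n) = emb e he :=
    emb_congr _ _ (flp_flp n e)
  rw [hflfl]
  rw [hspec, flp_flp]

/-- flipping another coordinate : σ invariant -/
lemma sigA_flip (F : Linf → Linf) (hbij : Set.BijOn F Bc Bc)
    (hne : ∀ a ∈ Bc, ∀ b ∈ Bc, ‖F a - F b‖ ≤ ‖a - b‖)
    {e : ℕ → ℝ} (he : IsPat e) (m n : ℕ) :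
    sigA F hbij hne (he.flp_pat m) n = sigA F hbij hne he n := by
  by_cases hmn : m = n
  · subst hmn; exact sigA_flip_self F hbij hne he m
  set s : ℕ → ℝ := fun i => G F hbij (emb e he) i with hs_def
  have hsne : ∀ j, s j ≠ 0 := fun j => (stepA F hbij hne he).ne_zero j
  set p := sigA F hbij hne he n with hp_def
  set q := sigA F hbij hne he m with hq_def
  set p2 := sigA F hbij hne (he.flp_pat m) n with hp2_def
  set q2 := sigA F hbij hne (he.flp_pat n) m with hq2_def
  have hpq : p ≠ q := by
    intro hpq
    have h1 := sigA_spec F hbij hne he n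
    have h2 := sigA_spec F hbij hne he m
    rw [← hp_def] at h1
    rw [← hq_def, ← hpq] at h2
    have := psi_inj_fun F hbij (he.flp_pat n) (he.flp_pat m) (by rw [h1, h2])
    have hn := congrFun this n
    rw [flp_apply_self, flp_apply_ne m e (Ne.symm hmn)] at hn
    exact he.ne_zero n (by linarith)
  -- main equation
  have key : flp p2 (flp q s) = flp q2 (flp p s) := by
    have h1 : (fun j => G F hbij (emb _ ((he.flp_pat m).flp_pat n)) j)
        = flp p2 (fun i => G F hbij (emb _ (he.flp_pat m)) i) := by
      exact sigA_spec F hbij hne (he.flp_pat m) n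
    have h2 : (fun j => G F hbij (emb _ ((he.flp_pat n).flp_pat m)) j)
        = flp q2 (fun i => G F hbij (emb _ (he.flp_pat n)) i) := by
      exact sigA_spec F hbij hne (he.flp_pat n) m
    have h3 : (fun i => G F hbij (emb _ (he.flp_pat m)) i) = flp q s :=
      sigA_spec F hbij hne he m
    have h4 : (fun i => G F hbij (emb _ (he.flp_pat n)) i) = flp p s :=
      sigA_spec F hbij hne he n
    have h5 : emb _ ((he.flp_pat m).flp_pat n) = emb _ ((he.flp_pat n).flp_pat m) :=
      emb_congr _ _ (flp_comm n m e)
    rw [h3] at h1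
    rw [h4] at h2
    rw [← h1, ← h2, h5]
  by_contra hp2p
  have hp2p' : p ≠ p2 := fun h => hp2p h.symm
  -- evaluate key at p
  have hkp := congrFun key p
  rw [flp_apply_ne p2 _ hp2p', flp_apply_ne q s hpq] at hkp
  -- so (flp q2 (flp p s)) p = s p ; conclude p = q2
  have hq2p : p = q2 := by
    by_contra hq2p
    rw [flp_apply_ne q2 _ hq2p, flp_apply_self] at hkp
    exact hsne p (by linarith)
  -- then ψ(flp m (flp n e)) = s = ψ e
  have hfinal : flp q2 (flp p s) = s := by
    rw [← hq2p, flp_flp]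
  have h2 : (fun j => G F hbij (emb _ ((he.flp_pat n).flp_pat m)) j)
      = flp q2 (fun i => G F hbij (emb _ (he.flp_pat n)) i) :=
    sigA_spec F hbij hne (he.flp_pat n) m
  have h4 : (fun i => G F hbij (emb _ (he.flp_pat n)) i) = flp p s :=
    sigA_spec F hbij hne he n
  rw [h4, hfinal] at h2
  have := psi_inj_fun F hbij ((he.flp_pat n).flp_pat m) he h2
  have hn := congrFun this n
  rw [flp_apply_ne m _ (Ne.symm hmn), flp_apply_self] at hn
  exact he.ne_zero n (by linarith)

/-- negation : σ invariant -/
lemma sigA_neg (F : Linf → Linf) (hbij : Set.BijOn F Bc Bc)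
    (hne : ∀ a ∈ Bc, ∀ b ∈ Bc, ‖F a - F b‖ ≤ ‖a - b‖)
    {e : ℕ → ℝ} (he : IsPat e) (n : ℕ) :
    sigA F hbij hne he.neg_pat n = sigA F hbij hne he n := by
  set p := sigA F hbij hne he n with hp_def
  refine (sigA_unique F hbij hne he.neg_pat n p ?_).symm
  have h1 : emb _ (IsPat.flp_pat he.neg_pat n) = emb _ ((he.flp_pat n).neg_pat) := by
    refine emb_congr _ _ ?_
    rw [flp_neg]
  rw [h1]
  funext j
  rw [G_neg F hbij hne (he.flp_pat n) j]
  have hs := sigA_spec F hbij hne he n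
  rw [← hp_def] at hs
  have := congrFun hs j
  rw [this]
  by_cases hj : j = p
  · subst hj
    rw [flp_apply_self, flp_apply_self]
    rw [G_neg F hbij hne he]
  · rw [flp_apply_ne _ _ hj, flp_apply_ne _ _ hj]
    rw [G_neg F hbij hne he]

/-- flip on a finite set -/
def flpS (S : Finset ℕ) (s : ℕ → ℝ) : ℕ → ℝ := fun j => if j ∈ S then -s j else s j

lemma flpS_empty (s : ℕ → ℝ) : flpS ∅ s = s := by
  funext j; simp [flpS]

lemma flpS_insert {a : ℕ} {S : Finset ℕ} (ha : a ∉ S) (s : ℕ → ℝ) :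
    flpS (insert a S) s = flp a (flpS S s) := by
  funext j
  by_cases hja : j = a
  · subst hja
    rw [flp_apply_self]
    simp [flpS, ha]
  · rw [flp_apply_ne _ _ hja]
    simp [flpS, hja]

lemma IsPat.flpS_pat {s : ℕ → ℝ} (hs : IsPat s) (S : Finset ℕ) : IsPat (flpS S s) := by
  classical
  induction S using Finset.induction_on with
  | empty => rw [flpS_empty]; exact hs
  | insert _ _ ha ih =>
      rw [flpS_insert ha]
      exact ih.flp_pat _

lemma sigA_one (F : Linf → Linf) (hbij : Set.BijOn F Bc Bc)
    (hne : ∀ a ∈ Bc, ∀ b ∈ Bc, ‖F a - F b‖ ≤ ‖a - b‖)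
    {e : ℕ → ℝ} (he : IsPat e) (n : ℕ) :
    sigA F hbij hne he n = sigA F hbij hne isPat_one n := by
  -- first: reduce to the case of eventual value 1
  obtain ⟨N, hN⟩ := he.2
  -- main auxiliary : finite disagreement with onePat
  have main : ∀ (S : Finset ℕ) (f : ℕ → ℝ) (hf : IsPat f),
      ({j | f j ≠ 1} ⊆ ↑S) → sigA F hbij hne hf n = sigA F hbij hne isPat_one n := by
    intro S
    classical
    induction S using Finset.induction_on with
    | empty =>
        intro f hf hsub
        have : f = onePat := by
          funext j
          by_contra hj
          exact absurd (hsub hj) (by simp)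
        exact sigA_congr F hbij hne hf isPat_one this n
    | @insert a S ha ih =>
        intro f hf hsub
        by_cases haf : f a = 1
        · refine ih f hf ?_
          intro j hj
          have := hsub hj
          simp only [Finset.coe_insert, Set.mem_insert_iff] at this
          rcases this with h | h
          · exact absurd (h ▸ haf) hj
          · exact h
        · -- flip at a
          set f' := flp a f with hf'_def
          have hf' : IsPat f' := hf.flp_pat a
          have hsub' : {j | f' j ≠ 1} ⊆ ↑S := by
            intro j hj
            simp only [Set.mem_setOf_eq] at hj
            by_cases hja : j = a
            · exfalso
              subst hja
              rw [hf'_def, flp_apply_self] at hj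
              rcases hf.1 j with h | h
              · exact haf h
              · rw [h] at hj; norm_num at hj
            · rw [hf'_def, flp_apply_ne _ _ hja] at hj
              have := hsub hj
              simp only [Finset.coe_insert, Set.mem_insert_iff] at this
              rcases this with h | h
              · exact absurd h hja
              · exact h
          have step1 : sigA F hbij hne hf n = sigA F hbij hne (hf'.flp_pat a) n := by
            refine sigA_congr F hbij hne hf (hf'.flp_pat a) ?_ n
            rw [hf'_def, flp_flp]
          rw [step1, sigA_flip F hbij hne hf' a n]
          exact ih f' hf' hsub'
  rcases he.1 N with hc | hc
  · -- eventual value 1 : disagreement ⊆ range N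
    refine main (Finset.range N) e he ?_
    intro j hj
    simp only [Set.mem_setOf_eq] at hj
    simp only [Finset.coe_range, Set.mem_Iio]
    by_contra hjN
    push_neg at hjN
    exact hj ((hN j hjN).trans hc)
  · -- eventual value -1 : use e = neg of (neg e)
    have h1 : sigA F hbij hne he n = sigA F hbij hne he.neg_pat.neg_pat n := by
      refine sigA_congr F hbij hne he he.neg_pat.neg_pat ?_ n
      funext j; simp
    rw [h1, sigA_neg F hbij hne he.neg_pat n]
    refine main (Finset.range N) _ he.neg_pat ?_
    intro j hj
    simp only [Set.mem_setOf_eq] at hj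
    simp only [Finset.coe_range, Set.mem_Iio]
    by_contra hjN
    push_neg at hjN
    apply hj
    rw [hN j hjN, hc]
    norm_num

/-- THE coordinate map -/
def sigF (F : Linf → Linf) (hbij : Set.BijOn F Bc Bc)
    (hne : ∀ a ∈ Bc, ∀ b ∈ Bc, ‖F a - F b‖ ≤ ‖a - b‖) : ℕ → ℕ :=
  fun n => sigA F hbij hne isPat_one n

lemma psi_flp (F : Linf → Linf) (hbij : Set.BijOn F Bc Bc)
    (hne : ∀ a ∈ Bc, ∀ b ∈ Bc, ‖F a - F b‖ ≤ ‖a - b‖)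
    {e : ℕ → ℝ} (he : IsPat e) (m : ℕ) :
    (fun j => G F hbij (emb _ (he.flp_pat m)) j)
      = flp (sigF F hbij hne m) (fun i => G F hbij (emb e he) i) := by
  have h := sigA_spec F hbij hne he m
  rwa [sigA_one F hbij hne he m] at h

lemma sigF_inj (F : Linf → Linf) (hbij : Set.BijOn F Bc Bc)
    (hne : ∀ a ∈ Bc, ∀ b ∈ Bc, ‖F a - F b‖ ≤ ‖a - b‖) :
    Function.Injective (sigF F hbij hne) := by
  intro n m hnm
  by_contra hne2
  have h1 := psi_flp F hbij hne isPat_one n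
  have h2 := psi_flp F hbij hne isPat_one m
  rw [hnm] at h1
  have := psi_inj_fun F hbij (isPat_one.flp_pat n) (isPat_one.flp_pat m) (by rw [h1, h2])
  have hn := congrFun this n
  rw [flp_apply_self, flp_apply_ne m onePat (by exact hne2)] at hn
  rw [onePat] at hn
  norm_num at hn

lemma psi_flpS (F : Linf → Linf) (hbij : Set.BijOn F Bc Bc)
    (hne : ∀ a ∈ Bc, ∀ b ∈ Bc, ‖F a - F b‖ ≤ ‖a - b‖) (S : Finset ℕ) :
    (fun j => G F hbij (emb _ (isPat_one.flpS_pat S)) j)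
      = flpS (S.image (sigF F hbij hne)) (fun i => G F hbij (emb onePat isPat_one) i) := by
  classical
  induction S using Finset.induction_on with
  | empty =>
      have hemb : emb _ (isPat_one.flpS_pat ∅) = emb onePat isPat_one :=
        emb_congr _ _ (flpS_empty onePat)
      rw [Finset.image_empty, hemb, flpS_empty]
  | @insert a S ha ih =>
      have h1 : emb _ (isPat_one.flpS_pat (insert a S))
          = emb _ ((isPat_one.flpS_pat S).flp_pat a) :=
        emb_congr _ _ (flpS_insert ha onePat)
      have h2 := psi_flp F hbij hne (isPat_one.flpS_pat S) a
      have h3 : Finset.image (sigF F hbij hne) (insert a S)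
          = insert (sigF F hbij hne a) (Finset.image (sigF F hbij hne) S) :=
        Finset.image_insert _ _ _
      have h4 : sigF F hbij hne a ∉ Finset.image (sigF F hbij hne) S := by
        intro hmem
        obtain ⟨b, hb, hab⟩ := Finset.mem_image.mp hmem
        exact ha ((sigF_inj F hbij hne hab).symm ▸ hb)
      funext j
      rw [h1]
      rw [congrFun h2 j, h3, flpS_insert h4]
      by_cases hj : j = sigF F hbij hne a
      · subst hj
        rw [flp_apply_self, flp_apply_self]
        rw [congrFun ih _]
      · rw [flp_apply_ne _ _ hj, flp_apply_ne _ _ hj]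
        rw [congrFun ih _]

lemma sigF_surj (F : Linf → Linf) (hbij : Set.BijOn F Bc Bc)
    (hne : ∀ a ∈ Bc, ∀ b ∈ Bc, ‖F a - F b‖ ≤ ‖a - b‖) :
    Function.Surjective (sigF F hbij hne) := by
  intro k
  by_contra hk
  push_neg at hk
  set β : Linf := G F hbij (emb onePat isPat_one) with hβ_def
  have hβBc : β ∈ Bc := G_mem F hbij (emb_mem_Bc isPat_one)
  have hβpat : IsPat (fun j => β j) := stepA F hbij hne isPat_one
  have habsβ : ∀ j, |β j| = 1 := fun j => hβpat.abs j
  have hβne : ∀ j, (β j : ℝ) ≠ 0 := fun j => hβpat.ne_zero j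
  have hbd0 : ∀ j, |β j / 2| ≤ 1 := by
    intro j; rw [abs_div, abs_two, habsβ j]; norm_num
  have hbd1 : ∀ j, |(if j = k then β k else β j / 2)| ≤ 1 := by
    intro j
    by_cases hj : j = k
    · rw [if_pos hj, habsβ k]
    · rw [if_neg hj]; exact hbd0 j
  set x₀ : Linf := Lmk _ hbd0 with hx0_def
  set x₁ : Linf := Lmk _ hbd1 with hx1_def
  have hx0c : ∀ j, x₀ j = β j / 2 := fun j => rfl
  have hx1c : ∀ j, x₁ j = if j = k then β k else β j / 2 := fun j => rfl
  have hx0Bc : x₀ ∈ Bc := by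
    constructor
    · exact norm_le_coords _ 1 hbd0
    · obtain ⟨l, hl⟩ := hβBc.2
      refine ⟨l/2, ?_⟩
      have : (fun n => x₀ n) = fun n => β n * (1/2) := by
        funext j; rw [hx0c]; ring
      rw [this]
      convert hl.mul_const (1/2) using 2
      ring
  have hx1Bc : x₁ ∈ Bc := by
    constructor
    · exact norm_le_coords _ 1 fun j => by rw [hx1c]; exact hbd1 j
    · obtain ⟨l, hl⟩ := hβBc.2
      refine ⟨l/2, ?_⟩
      have heq2 : (fun n => x₀ n) =ᶠ[atTop] (fun n => x₁ n) := by
        filter_upwards [eventually_ge_atTop (k+1)] with j hj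
        rw [hx0c, hx1c, if_neg (by omega)]
      refine Tendsto.congr' heq2 ?_
      have : (fun n => x₀ n) = fun n => β n * (1/2) := by
        funext j; rw [hx0c]; ring
      rw [this]
      convert hl.mul_const (1/2) using 2
      ring
  -- pinning for each coordinate m
  have hpin : ∀ m : ℕ, F x₀ m = 1/2 ∧ F x₁ m = 1/2 := by
    intro m
    have hflp := psi_flp F hbij hne isPat_one m
    have hGc : ∀ j, G F hbij (emb _ (isPat_one.flp_pat m)) j
        = flp (sigF F hbij hne m) (fun i => β i) j := fun j => congrFun hflp j
    have hσk : sigF F hbij hne m ≠ k := hk m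
    have hyp1 : ∀ (x : Linf), (∀ j, x j = β j / 2 ∨ (j = k ∧ x j = β k)) →
        ‖x - G F hbij (emb onePat isPat_one)‖ ≤ 1/2 := by
      intro x hx
      refine norm_le_coords _ _ fun j => ?_
      rw [sub_coord, ← hβ_def]
      rcases hx j with h | ⟨hjk, h⟩
      · rw [h]
        have : β j / 2 - β j = -(β j/2) := by ring
        rw [this, abs_neg, abs_div, abs_two, habsβ j]
      · subst hjk
        rw [h]
        simp
    have hyp2 : ∀ (x : Linf), (∀ j, x j = β j / 2 ∨ (j = k ∧ x j = β k)) →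
        ‖x - G F hbij (emb _ (isPat_one.flp_pat m))‖ ≤ 3/2 := by
      intro x hx
      refine norm_le_coords _ _ fun j => ?_
      rw [sub_coord, hGc j]
      by_cases hjσ : j = sigF F hbij hne m
      · rw [hjσ, flp_apply_self]
        rcases hx (sigF F hbij hne m) with h | ⟨hjk, h⟩
        · rw [h]
          have hr : (β (sigF F hbij hne m) : ℝ) / 2 - -(β (sigF F hbij hne m))
              = (3/2) * β (sigF F hbij hne m) := by ring
          rw [hr, abs_mul, habsβ]
          rw [mul_one]
          rw [abs_of_pos (show (0:ℝ) < 3/2 by norm_num)]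
        · exact absurd hjk hσk
      · rw [flp_apply_ne _ _ hjσ]
        rcases hx j with h | ⟨hjk, h⟩
        · rw [h]
          have hr : (β j : ℝ) / 2 - β j = -(β j/2) := by ring
          rw [hr, abs_neg, abs_div, abs_two, habsβ j]
          norm_num
        · subst hjk
          rw [h]
          simp only [sub_self, abs_zero]
          norm_num
    have hx0p : ∀ j, x₀ j = β j / 2 ∨ (j = k ∧ x₀ j = β k) := fun j => Or.inl (hx0c j)
    have hx1p : ∀ j, x₁ j = β j / 2 ∨ (j = k ∧ x₁ j = β k) := by
      intro j
      by_cases hj : j = k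
      · right; exact ⟨hj, by rw [hx1c, if_pos hj]⟩
      · left; rw [hx1c, if_neg hj]
    have hjm : flp m onePat m = -(onePat m) := flp_apply_self m onePat
    have p0 := pin F hbij hne isPat_one (isPat_one.flp_pat m) hx0Bc
      (hyp1 x₀ hx0p) (hyp2 x₀ hx0p) hjm
    have p1 := pin F hbij hne isPat_one (isPat_one.flp_pat m) hx1Bc
      (hyp1 x₁ hx1p) (hyp2 x₁ hx1p) hjm
    rw [onePat] at p0 p1
    norm_num at p0 p1
    exact ⟨p0, p1⟩
  have hxeq : x₀ = x₁ := by
    refine F_inj F hbij hx0Bc hx1Bc (Linf_ext fun m => ?_)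
    rw [(hpin m).1, (hpin m).2]
  have := congrArg (fun z : Linf => z k) hxeq
  simp only at this
  rw [hx0c k, hx1c k, if_pos rfl] at this
  exact hβne k (by linarith)

lemma pm_mul {a b : ℝ} (ha : a = 1 ∨ a = -1) (hb : b = 1 ∨ b = -1) :
    a * b = 1 ∨ a * b = -1 := by
  rcases ha with h | h <;> rcases hb with h' | h' <;> rw [h, h'] <;> norm_num

lemma pm_sq {a : ℝ} (ha : a = 1 ∨ a = -1) : a * a = 1 := by
  rcases ha with h | h <;> rw [h] <;> norm_num

lemma final_bound (F : Linf → Linf) (hbij : Set.BijOn F Bc Bc)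
    (hne : ∀ a ∈ Bc, ∀ b ∈ Bc, ‖F a - F b‖ ≤ ‖a - b‖)
    {x : Linf} (hx : x ∈ Bc) (n m : ℕ) (hm : sigF F hbij hne m = n)
    (ζ : ℝ) (hζ : ζ = 1 ∨ ζ = -1) (hsign : 0 ≤ ζ * x n)
    (δ : ℝ) (hδ : 0 < δ) :
    -δ ≤ (G F hbij (emb onePat isPat_one) n) * ζ * (F x m) := by
  classical
  set σ : ℕ → ℕ := sigF F hbij hne with hσ_def
  set β : Linf := G F hbij (emb onePat isPat_one) with hβ_def
  have hβBc : β ∈ Bc := G_mem F hbij (emb_mem_Bc isPat_one)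
  have hβpat : IsPat (fun j => β j) := stepA F hbij hne isPat_one
  have hβpm : ∀ j, (β j : ℝ) = 1 ∨ β j = -1 := fun j => hβpat.1 j
  have hβsq : ∀ j, (β j : ℝ) * β j = 1 := fun j => pm_sq (hβpm j)
  obtain ⟨l, hl⟩ := hx.2
  obtain ⟨Nβ, hNβ⟩ := hβpat.2
  set ε : ℝ := if 0 ≤ l then β Nβ else -(β Nβ) with hε_def
  have hεpm : ε = 1 ∨ ε = -1 := by
    rw [hε_def]
    rcases hβpm Nβ with h | h <;> rw [h] <;> by_cases h0 : 0 ≤ l <;>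
      simp [h0]
  -- eventually no bad coordinates
  obtain ⟨J2, hJ2⟩ := Metric.tendsto_atTop.mp hl δ hδ
  set J := max Nβ J2 with hJ_def
  have hJ : ∀ j ≥ J, ¬(δ < |x j| ∧ ε * β j * x j < 0) := by
    intro j hj
    rintro ⟨h1, h2⟩
    have hjN : Nβ ≤ j := le_trans (le_max_left _ _) hj
    have hjJ2 : J2 ≤ j := le_trans (le_max_right _ _) hj
    have hβj : (β j : ℝ) = β Nβ := hNβ j hjN
    have hdist := hJ2 j hjJ2
    rw [Real.dist_eq, abs_lt] at hdist
    by_cases h0 : 0 ≤ l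
    · have hεβ : ε * β j = 1 := by
        rw [hε_def, if_pos h0, hβj]; exact hβsq Nβ
      rw [hεβ, one_mul] at h2
      -- x j < 0 and |x j| > δ so x j < -δ ; but x j > l - δ ≥ -δ
      rw [abs_of_neg h2] at h1
      linarith [hdist.1]
    · have hεβ : ε * β j = -1 := by
        rw [hε_def, if_neg h0, hβj]
        have := hβsq Nβ
        linarith [this]
      rw [hεβ] at h2
      have hxj : 0 < x j := by nlinarith
      rw [abs_of_pos hxj] at h1
      push_neg at h0
      linarith [hdist.2]
  -- the bad set
  set Sbad : Finset ℕ :=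
    (Finset.range J).filter (fun j => j ≠ n ∧ δ < |x j| ∧ ε * β j * x j < 0) with hSbad_def
  have hSbad_mem : ∀ j, j ∈ Sbad ↔ (j < J ∧ j ≠ n ∧ δ < |x j| ∧ ε * β j * x j < 0) := by
    intro j
    rw [hSbad_def, Finset.mem_filter, Finset.mem_range]
  have hSbad_covers : ∀ j, j ≠ n → δ < |x j| → ε * β j * x j < 0 → j ∈ Sbad := by
    intro j hjn h1 h2
    rw [hSbad_mem]
    refine ⟨?_, hjn, h1, h2⟩
    by_contra hjJ
    push_neg at hjJ
    exact hJ j hjJ ⟨h1, h2⟩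
  have hnS : n ∉ Sbad := fun h => ((hSbad_mem n).mp h).2.1 rfl
  -- the flip set
  set T : Finset ℕ := if ε * β n = ζ then Sbad else insert n Sbad with hT_def
  have hmemT : ∀ j, j ≠ n → (j ∈ T ↔ j ∈ Sbad) := by
    intro j hjn
    rw [hT_def]
    split_ifs with h
    · rfl
    · rw [Finset.mem_insert]
      constructor
      · rintro (h' | h')
        · exact absurd h' hjn
        · exact h'
      · exact fun h' => Or.inr h'
  have hnT : n ∈ T ↔ ε * β n ≠ ζ := by
    rw [hT_def]
    split_ifs with h
    · constructor
      · intro hn; exact absurd hn hnS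
      · intro hn; exact absurd h hn
    · simp [h]
  -- the sign pattern on source side
  set Apat : ℕ → ℝ := fun j => if j ∈ T then -(ε * β j) else ε * β j with hApat_def
  have hApm : ∀ j, Apat j = 1 ∨ Apat j = -1 := by
    intro j
    simp only [hApat_def]
    have := pm_mul hεpm (hβpm j)
    split_ifs with h
    · rcases this with h' | h' <;> rw [h'] <;> norm_num
    · exact this
  have hAn : Apat n = ζ := by
    simp only [hApat_def]
    by_cases h : ε * β n = ζ
    · rw [if_neg (fun hn => (hnT.mp hn) h)]
      exact h
    · rw [if_pos (hnT.mpr h)]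
      rcases hζ with h1 | h1 <;> rcases pm_mul hεpm (hβpm n) with h2 | h2 <;>
        rw [h1] at h ⊢ <;> rw [h2] at h ⊢ <;> first | exact absurd rfl h | norm_num
  have hAsign : ∀ j, j ≠ n → (0 ≤ Apat j * x j ∨ |x j| ≤ δ) := by
    intro j hjn
    by_cases hbad : j ∈ Sbad
    · left
      have hb := (hSbad_mem j).mp hbad
      simp only [hApat_def]
      rw [if_pos ((hmemT j hjn).mpr hbad)]
      have := hb.2.2.2
      nlinarith
    · by_cases hsmall : |x j| ≤ δ
      · right; exact hsmall
      · left
        push_neg at hsmall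
        have hgood : ¬(ε * β j * x j < 0) := fun hc =>
          hbad (hSbad_covers j hjn hsmall hc)
        push_neg at hgood
        simp only [hApat_def]
        rw [if_neg (fun hT' => hbad ((hmemT j hjn).mp hT'))]
        exact hgood
  -- relate Apat to G of a target pattern
  set τ : ℕ → ℕ := Function.invFun σ with hτ_def
  have hστ : ∀ t, σ (τ t) = t := fun t =>
    Function.rightInverse_invFun (sigF_surj F hbij hne) t
  set S : Finset ℕ := T.image τ with hS_def
  have hST : S.image σ = T := by
    rw [hS_def, Finset.image_image]
    refine Finset.image_congr (fun t _ => hστ t) |>.trans ?_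
    exact Finset.image_id
  have hmS : m ∈ S ↔ n ∈ T := by
    rw [hS_def]
    constructor
    · intro hmem
      obtain ⟨t, ht, htm⟩ := Finset.mem_image.mp hmem
      have : σ m = t := by rw [← htm, hστ t]
      rw [hm] at this
      rwa [this]
    · intro hn
      refine Finset.mem_image.mpr ⟨n, hn, ?_⟩
      have : σ (τ n) = σ m := by rw [hστ n, hm]
      exact sigF_inj F hbij hne this
  -- the target pattern e'
  have hcase : ∀ j, G F hbij (emb _ (isPat_one.flpS_pat S)) j = flpS T (fun i => β i) j := by
    intro j
    have h1 := congrFun (psi_flpS F hbij hne S) j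
    rw [h1, ← hσ_def, hST, hβ_def]
  rcases hεpm with hε1 | hε1
  · -- ε = 1 : use e' = flpS S onePat
    set e' : ℕ → ℝ := flpS S onePat with he'_def
    have he' : IsPat e' := isPat_one.flpS_pat S
    have hΦ : ∀ j, G F hbij (emb e' he') j = Apat j := by
      intro j
      rw [hcase j]
      simp only [hApat_def, flpS]
      rw [hε1]
      split_ifs <;> ring
    have he'm : e' m = β n * ζ := by
      rw [he'_def]
      simp only [flpS, onePat]
      have hAn' := hAn
      simp only [hApat_def] at hAn'
      by_cases hnT' : n ∈ T
      · rw [if_pos ((hmS).mpr hnT')]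
        rw [if_pos hnT', hε1] at hAn'
        rw [← hAn']
        have := hβsq n
        nlinarith [hβsq n]
      · rw [if_neg (fun h => hnT' (hmS.mp h))]
        rw [if_neg hnT', hε1] at hAn'
        rw [← hAn']
        nlinarith [hβsq n]
    -- the norm bound
    have hnorm : ‖x - G F hbij (emb e' he')‖ ≤ 1 + δ := by
      refine norm_le_coords _ _ fun j => ?_
      rw [sub_coord, hΦ j]
      by_cases hjn : j = n
      · subst hjn
        rw [hAn]
        rcases hζ with h1 | h1 <;> rw [h1] <;> rw [h1] at hsign <;>
          [skip; skip] <;>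
        · have hxj := Bc_coord hx j
          rw [abs_le] at hxj
          rw [abs_le]
          constructor <;> nlinarith
      · rcases hAsign j hjn with h | h
        · rcases hApm j with h1 | h1 <;> rw [h1] <;> rw [h1] at h <;>
            have hxj := Bc_coord hx j <;> rw [abs_le] at hxj <;> rw [abs_le] <;>
            constructor <;> nlinarith
        · rcases hApm j with h1 | h1 <;> rw [h1] <;>
            rw [abs_le] at h ⊢ <;> constructor <;> linarith [h.1, h.2]
    have himg : ‖F x - emb e' he'‖ ≤ 1 + δ := by
      have h2 := hne _ hx _ (G_mem F hbij (emb_mem_Bc he'))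
      rw [FG F hbij (emb_mem_Bc he')] at h2
      exact h2.trans hnorm
    have hcoord : |F x m - e' m| ≤ 1 + δ := by
      have := coord_le_norm (F x - emb e' he') m
      rw [sub_coord] at this
      exact this.trans himg
    rw [he'm] at hcoord
    rw [abs_le] at hcoord
    rcases pm_mul (hβpm n) hζ with h1 | h1 <;> rw [h1] at hcoord ⊢ <;>
      [linarith [hcoord.2]; linarith [hcoord.1]]
  · -- ε = -1 : use e' = -(flpS S onePat)
    set e' : ℕ → ℝ := fun i => -(flpS S onePat i) with he'_def
    have he' : IsPat e' := (isPat_one.flpS_pat S).neg_pat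
    have hΦ : ∀ j, G F hbij (emb e' he') j = Apat j := by
      intro j
      rw [G_neg F hbij hne (isPat_one.flpS_pat S) j]
      rw [hcase j]
      simp only [hApat_def, flpS]
      rw [hε1]
      split_ifs <;> ring
    have he'm : e' m = β n * ζ := by
      rw [he'_def]
      simp only [flpS, onePat]
      have hAn' := hAn
      simp only [hApat_def] at hAn'
      by_cases hnT' : n ∈ T
      · rw [if_pos ((hmS).mpr hnT')]
        rw [if_pos hnT', hε1] at hAn'
        rw [← hAn']
        nlinarith [hβsq n]
      · rw [if_neg (fun h => hnT' (hmS.mp h))]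
        rw [if_neg hnT', hε1] at hAn'
        rw [← hAn']
        nlinarith [hβsq n]
    have hnorm : ‖x - G F hbij (emb e' he')‖ ≤ 1 + δ := by
      refine norm_le_coords _ _ fun j => ?_
      rw [sub_coord, hΦ j]
      by_cases hjn : j = n
      · subst hjn
        rw [hAn]
        rcases hζ with h1 | h1 <;> rw [h1] <;> rw [h1] at hsign <;>
          [skip; skip] <;>
        · have hxj := Bc_coord hx j
          rw [abs_le] at hxj
          rw [abs_le]
          constructor <;> nlinarith
      · rcases hAsign j hjn with h | h
        · rcases hApm j with h1 | h1 <;> rw [h1] <;> rw [h1] at h <;>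
            have hxj := Bc_coord hx j <;> rw [abs_le] at hxj <;> rw [abs_le] <;>
            constructor <;> nlinarith
        · rcases hApm j with h1 | h1 <;> rw [h1] <;>
            rw [abs_le] at h ⊢ <;> constructor <;> linarith [h.1, h.2]
    have himg : ‖F x - emb e' he'‖ ≤ 1 + δ := by
      have h2 := hne _ hx _ (G_mem F hbij (emb_mem_Bc he'))
      rw [FG F hbij (emb_mem_Bc he')] at h2
      exact h2.trans hnorm
    have hcoord : |F x m - e' m| ≤ 1 + δ := by
      have := coord_le_norm (F x - emb e' he') m
      rw [sub_coord] at this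
      exact this.trans himg
    rw [he'm] at hcoord
    rw [abs_le] at hcoord
    rcases pm_mul (hβpm n) hζ with h1 | h1 <;> rw [h1] at hcoord ⊢ <;>
      [linarith [hcoord.2]; linarith [hcoord.1]]


theorem exists_sign_pattern_c (F : Linf → Linf) (hbij : Set.BijOn F Bc Bc)
    (hne : ∀ a ∈ Bc, ∀ b ∈ Bc, ‖F a - F b‖ ≤ ‖a - b‖) :
    ∃ σ : ℕ → ℕ, Function.Bijective σ ∧
      ∃ α : ℕ → ℝ, (∀ n, α n = 1 ∨ α n = -1) ∧
        (∃ N : ℕ, ∀ m ≥ N, α m = α N) ∧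
        ∀ x ∈ Bc, ∀ n : ℕ,
          (x n = 0 → F x (σ n) = 0) ∧
          (x n < 0 → α n * F x (σ n) ≤ 0) ∧
          (0 < x n → 0 ≤ α n * F x (σ n)) := by
  classical
  have hσbij : Function.Bijective (sigF F hbij hne) :=
    ⟨sigF_inj F hbij hne, sigF_surj F hbij hne⟩
  set Eσ := Equiv.ofBijective _ hσbij with hEσ_def
  have hβpat : IsPat (fun j => G F hbij (emb onePat isPat_one) j) := stepA F hbij hne isPat_one
  refine ⟨fun n => Eσ.symm n, Eσ.symm.bijective, fun n => G F hbij (emb onePat isPat_one) n,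
    hβpat.1, hβpat.2, ?_⟩
  intro x hx n
  set β : Linf := G F hbij (emb onePat isPat_one) with hβ_def
  set m : ℕ := Eσ.symm n with hm_def
  have hm : sigF F hbij hne m = n := Eσ.apply_symm_apply n
  have key : ∀ ζ : ℝ, (ζ = 1 ∨ ζ = -1) → 0 ≤ ζ * x n → 0 ≤ β n * ζ * F x m := by
    intro ζ hζ hsign
    by_contra hcon
    push_neg at hcon
    have hb := final_bound F hbij hne hx n m hm ζ hζ hsign
      (-(β n * ζ * F x m)/2) (by linarith)
    rw [← hβ_def] at hb
    linarith
  refine ⟨?_, ?_, ?_⟩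
  · intro hx0
    have k1 := key 1 (Or.inl rfl) (by rw [hx0]; norm_num)
    have k2 := key (-1) (Or.inr rfl) (by rw [hx0]; norm_num)
    have e1 : β n * 1 * F x m = β n * F x m := by ring
    have e2 : β n * (-1) * F x m = -(β n * F x m) := by ring
    rw [e1] at k1
    rw [e2] at k2
    have h0 : β n * F x m = 0 := le_antisymm (by linarith) k1
    show F x m = 0
    rcases hβpat.1 n with h | h <;> simp only at h <;> rw [h] at h0 <;> linarith
  · intro hneg
    have k2 := key (-1) (Or.inr rfl) (by nlinarith)
    have e2 : β n * (-1) * F x m = -(β n * F x m) := by ring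
    rw [e2] at k2
    show β n * F x m ≤ 0
    linarith
  · intro hpos
    have k1 := key 1 (Or.inl rfl) (by nlinarith)
    have e1 : β n * 1 * F x m = β n * F x m := by ring
    rw [e1] at k1
    show 0 ≤ β n * F x m
    exact k1
end
end

section
/- Let F̃ : B → B be a non-expansive bijection of the unit ball of c satisfying the contraction-toward-zero conditions (x_n < 0 ⇒ F̃(x)_n ∈ [x_n, 0]; x_n > 0 ⇒ F̃(x)_n ∈ [0, x_n]; x_n = 0 ⇒ F̃(x)_n = 0). Let x ∈ B be such that the set S = {i ∈ ℕ : x_i ∉ {−1, 1}} is finite. Then F̃(x) = x. -/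
open Filter Topology Metric Set ENNReal

noncomputable section

lemma dom_aux {a b : ℝ} (h1 : a < 0 → b ∈ Set.Icc a 0) (h2 : 0 < a → b ∈ Set.Icc 0 a)
    (h3 : a = 0 → b = 0) : |b| ≤ |a| ∧ |a - b| = |a| - |b| := by
  rcases lt_trichotomy a 0 with h | h | h
  · obtain ⟨hb1, hb2⟩ := h1 h
    rw [abs_of_nonpos hb2, abs_of_nonpos h.le, abs_of_nonpos (by linarith : a - b ≤ 0)]
    constructor <;> linarith
  · simp [h3 h, h]
  · obtain ⟨hb1, hb2⟩ := h2 h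
    rw [abs_of_nonneg hb1, abs_of_nonneg h.le, abs_of_nonneg (by linarith : 0 ≤ a - b)]
    constructor <;> linarith

lemma dom_pm {a b : ℝ} (h1 : a < 0 → b ∈ Set.Icc a 0) (h2 : 0 < a → b ∈ Set.Icc 0 a)
    (h3 : a = 0 → b = 0) (ha : |a| ≤ 1) (hb : b = 1 ∨ b = -1) : a = b := by
  rw [abs_le] at ha
  rcases lt_trichotomy a 0 with h | h | h
  · obtain ⟨hb1, hb2⟩ := h1 h
    rcases hb with rfl | rfl <;> linarith [ha.1]
  · rcases hb with rfl | rfl <;> simp_all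
  · obtain ⟨hb1, hb2⟩ := h2 h
    rcases hb with rfl | rfl <;> linarith [ha.2]

theorem fixes_eventually_pm_one (F : Linf → Linf) (hbij : Set.BijOn F Bc Bc)
    (hne : ∀ a ∈ Bc, ∀ b ∈ Bc, ‖F a - F b‖ ≤ ‖a - b‖)
    (hcon : ∀ x ∈ Bc, ∀ n : ℕ,
      (x n < 0 → F x n ∈ Set.Icc (x n) 0) ∧
      (0 < x n → F x n ∈ Set.Icc 0 (x n)) ∧
      (x n = 0 → F x n = 0)) :
    ∀ x ∈ Bc, {i : ℕ | x i ≠ 1 ∧ x i ≠ -1}.Finite → F x = x := by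
  intro x hx hS
  classical
  set T : Finset ℕ := hS.toFinset with hT
  -- choose preimages
  choose pre hpremem hpreeq using fun z (hz : z ∈ Bc) => hbij.surjOn hz
  -- iterated preimages
  let Y : ℕ → {z : Linf // z ∈ Bc} := fun k =>
    Nat.rec ⟨x, hx⟩ (fun _ w => ⟨pre w.1 w.2, hpremem w.1 w.2⟩) k
  set y : ℕ → Linf := fun k => (Y k).1 with hy
  have hymem : ∀ k, y k ∈ Bc := fun k => (Y k).2
  have hY0 : y 0 = x := rfl
  have hYs : ∀ k, F (y (k + 1)) = y k := fun k => hpreeq (y k) (hymem k)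
  -- coordinate bound by norm
  have hcoord : ∀ (v : Linf) (n : ℕ), |v n| ≤ ‖v‖ := fun v n =>
    lp.norm_apply_le_norm ENNReal.top_ne_zero v n
  -- domination facts
  have hdom : ∀ k n, |y k n| ≤ |y (k + 1) n| ∧
      |y (k + 1) n - y k n| = |y (k + 1) n| - |y k n| := by
    intro k n
    have h := hcon (y (k + 1)) (hymem (k + 1)) n
    rw [hYs k] at h
    exact dom_aux h.1 h.2.1 h.2.2
  -- off T, all y k agree with x (and are ±1)
  have hoffT : ∀ n, n ∉ T → ∀ k, y k n = x n := by
    intro n hn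
    have hpm : x n = 1 ∨ x n = -1 := by
      simp only [hT, Set.Finite.mem_toFinset, Set.mem_setOf_eq] at hn
      by_contra hc
      push_neg at hc
      exact hn ⟨hc.1, hc.2⟩
    intro k
    induction k with
    | zero => rfl
    | succ k ih =>
      have h := hcon (y (k + 1)) (hymem (k + 1)) n
      rw [hYs k] at h
      have hle : |y (k + 1) n| ≤ 1 := le_trans (hcoord _ n) (hymem (k + 1)).1
      have := dom_pm h.1 h.2.1 h.2.2 hle (by rw [ih]; exact hpm)
      rw [this, ih]
  -- differences vanish off T
  have hdiff0 : ∀ k n, n ∉ T → y (k + 1) n - y k n = 0 := by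
    intro k n hn
    rw [hoffT n hn (k + 1), hoffT n hn k, sub_self]
  -- norm of difference bounded by sum over T
  have hnormle : ∀ k, ‖y (k + 1) - y k‖ ≤ ∑ n ∈ T, |y (k + 1) n - y k n| := by
    intro k
    refine lp.norm_le_of_forall_le (Finset.sum_nonneg fun n _ => abs_nonneg _) fun n => ?_
    have hcoe : (y (k + 1) - y k) n = y (k + 1) n - y k n := rfl
    rw [Real.norm_eq_abs, hcoe]
    by_cases hn : n ∈ T
    · exact Finset.single_le_sum (fun m _ => abs_nonneg (y (k + 1) m - y k m)) hn
    · rw [hdiff0 k n hn, abs_zero]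
      exact Finset.sum_nonneg fun m _ => abs_nonneg _
  -- distances nondecreasing
  set d : ℕ → ℝ := fun k => ‖y (k + 1) - y k‖ with hd
  have hmono : ∀ k, d 0 ≤ d k := by
    intro k
    induction k with
    | zero => exact le_refl _
    | succ k ih =>
      refine le_trans ih ?_
      have := hne (y (k + 2)) (hymem (k + 2)) (y (k + 1)) (hymem (k + 1))
      rw [hYs (k + 1), hYs k] at this
      exact le_trans this (le_refl _)
  -- telescoping bound
  have htel : ∀ K : ℕ, ∑ k ∈ Finset.range K, d k ≤ 2 * T.card := by
    intro K
    calc ∑ k ∈ Finset.range K, d k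
        ≤ ∑ k ∈ Finset.range K, ∑ n ∈ T, |y (k + 1) n - y k n| :=
          Finset.sum_le_sum fun k _ => hnormle k
      _ = ∑ n ∈ T, ∑ k ∈ Finset.range K, (|y (k + 1) n| - |y k n|) := by
          rw [Finset.sum_comm]
          exact Finset.sum_congr rfl fun n _ => Finset.sum_congr rfl fun k _ => (hdom k n).2
      _ = ∑ n ∈ T, (|y K n| - |y 0 n|) := by
          exact Finset.sum_congr rfl fun n _ => Finset.sum_range_sub (fun k => |y k n|) K
      _ ≤ ∑ n ∈ T, 2 := by
          refine Finset.sum_le_sum fun n _ => ?_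
          have h1 : |y K n| ≤ 1 := le_trans (hcoord _ n) (hymem K).1
          have h2 : 0 ≤ |y 0 n| := abs_nonneg _
          linarith
      _ = 2 * T.card := by rw [Finset.sum_const, nsmul_eq_mul, mul_comm]
  have hd0 : d 0 = 0 := by
    by_contra hne0
    have hpos : 0 < d 0 := lt_of_le_of_ne (norm_nonneg _) (Ne.symm hne0)
    obtain ⟨K, hK⟩ := Archimedean.arch (2 * (T.card : ℝ)) hpos
    have : (K + 1 : ℝ) * d 0 ≤ ∑ k ∈ Finset.range (K + 1), d k := by
      have := Finset.sum_le_sum (fun k (_ : k ∈ Finset.range (K + 1)) => hmono k)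
      simpa [Finset.sum_const, mul_comm] using this
    have h2 := htel (K + 1)
    have hK' : 2 * (T.card : ℝ) ≤ K * d 0 := by simpa [nsmul_eq_mul] using hK
    have : (K + 1 : ℝ) * d 0 ≤ K * d 0 := by linarith
    nlinarith
  have hy1 : y 1 = x := by
    have : y 1 - y 0 = 0 := by
      rwa [hd, norm_eq_zero] at hd0
    have := sub_eq_zero.mp this
    rwa [hY0] at this
  calc F x = F (y 1) := by rw [hy1]
    _ = y 0 := hYs 0
    _ = x := hY0
end
end

section
/- Let F̃ : B → B be a non-expansive bijection of the unit ball of c such that F̃ fixes every sequence whose coordinates are eventually ±1 (i.e., F̃(x) = x whenever {i : x_i ∉ {−1,1}} is finite) and satisfies the contraction-toward-zero conditions (x_n < 0 ⇒ F̃(x)_n ∈ [x_n, 0]; x_n > 0 ⇒ F̃(x)_n ∈ [0, x_n]; x_n = 0 ⇒ F̃(x)_n = 0). Then for every x ∈ B with h = lim x_k and every n ∈ ℕ: (1) if |x_n| < |h| then F̃(x)_n = x_n; (2) if x_n ≥ |h| then F̃(x)_n ∈ [|h|, x_n]; (3) if x_n ≤ −|h| then F̃(x)_n ∈ [x_n,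 −|h|]. -/
open Filter Topology Metric Set ENNReal

noncomputable section

lemma auxA (F : Linf → Linf)
    (hne : ∀ a ∈ Bc, ∀ b ∈ Bc, ‖F a - F b‖ ≤ ‖a - b‖)
    (hfix : ∀ x ∈ Bc, {i : ℕ | x i ≠ 1 ∧ x i ≠ -1}.Finite → F x = x)
    (x : Linf) (hx : x ∈ Bc) (h : ℝ) (hlim : Tendsto (fun k => x k) atTop (𝓝 h))
    (hh : h ≠ 0) (n : ℕ) (t : ℝ) (ht : t = 1 ∨ t = -1) (r : ℝ)
    (hxn : |x n - t| ≤ r) (hr : 1 - |h| < r) : |F x n - t| ≤ r := by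
  have hx1 : ‖x‖ ≤ 1 := hx.1
  have hxi : ∀ i, |x i| ≤ 1 := fun i =>
    (lp.norm_apply_le_norm (by norm_num) x i).trans hx1
  have habs : |h| ≤ 1 := by
    have := le_of_tendsto' hlim.abs (fun i => hxi i); simpa using this
  set s : ℝ := if 0 < h then 1 else -1 with hs
  have hs1 : s = 1 ∨ s = -1 := by
    rcases lt_or_ge 0 h with h0 | h0
    · left; simp [hs, h0]
    · right; simp [hs, not_lt.2 h0]
  have hhs : |h - s| = 1 - |h| := by
    rcases lt_or_ge 0 h with h0 | h0
    · simp only [hs, if_pos h0]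
      rw [abs_of_pos h0] at habs ⊢
      rw [abs_of_nonpos (by linarith)]; ring
    · have h0' : h < 0 := lt_of_le_of_ne h0 hh
      simp only [hs, if_neg (not_lt.2 h0)]
      rw [abs_of_neg h0'] at habs ⊢
      rw [abs_of_nonneg (by linarith)]; ring
  have hev : ∀ᶠ i in atTop, |x i - s| ≤ r := by
    have := ((hlim.sub_const s).abs : Tendsto (fun i => |x i - s|) atTop (𝓝 |h - s|))
    rw [hhs] at this
    exact (this.eventually_lt_const hr).mono fun i hi => hi.le
  obtain ⟨N, hN⟩ := eventually_atTop.1 hev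
  set u : ℕ → ℝ := fun i => if i = n then t else if i < N then x i else s with hu
  have hub : ∀ i, |u i| ≤ 1 := by
    intro i
    simp only [hu]
    split
    · rcases ht with rfl | rfl <;> norm_num
    · split
      · exact hxi i
      · rcases hs1 with h1 | h1 <;> rw [h1] <;> norm_num
  have hmem : Memℓp u ∞ := by
    apply memℓp_infty
    refine ⟨1, ?_⟩
    rintro y ⟨i, rfl⟩
    exact hub i
  set U : Linf := ⟨u, hmem⟩ with hU
  have hUi : ∀ i, U i = u i := fun i => rfl
  have hUBc : U ∈ Bc := by
    constructor
    · exact lp.norm_le_of_forall_le zero_le_one fun i => hub i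
    · refine ⟨s, ?_⟩
      apply Tendsto.congr' _ (tendsto_const_nhds (x := s))
      filter_upwards [eventually_ge_atTop (max N (n + 1))] with i hi
      have h1 : ¬ i = n := by omega
      have h2 : ¬ i < N := by omega
      simp [hUi, hu, h1, h2]
  have hfixU : F U = U := by
    apply hfix U hUBc
    apply Set.Finite.subset (Set.finite_Iio N)
    intro i hi
    simp only [Set.mem_setOf_eq, hUi, hu] at hi
    by_contra hiN
    simp only [Set.mem_Iio, not_lt] at hiN
    have h2 : ¬ i < N := by omega
    rcases eq_or_ne i n with rfl | h1
    · simp only [if_pos rfl] at hi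
      rcases ht with rfl | rfl
      · exact hi.1 rfl
      · exact hi.2 rfl
    · simp only [if_neg h1, if_neg h2] at hi
      rcases hs1 with h3 | h3
      · exact hi.1 h3
      · exact hi.2 h3
  have hr0 : 0 ≤ r := (abs_nonneg _).trans hxn
  have hUn : U n = t := by simp [hUi, hu]
  have key : ‖x - U‖ ≤ r := by
    apply lp.norm_le_of_forall_le hr0
    intro i
    have : (x - U) i = x i - U i := by
      rw [lp.coeFn_sub]; rfl
    rw [this]
    rcases eq_or_ne i n with rfl | h1
    · rw [hUn]; exact hxn
    · rcases lt_or_ge i N with h2 | h2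
      · simp [hUi, hu, h1, h2, hr0]
      · have h2' : ¬ i < N := not_lt.2 h2
        simp only [hUi, hu, if_neg h1, if_neg h2']
        exact hN i h2
  have step : ‖(F x - F U) n‖ ≤ ‖F x - F U‖ := lp.norm_apply_le_norm (by norm_num) _ n
  have : (F x - F U) n = F x n - t := by
    rw [lp.coeFn_sub, hfixU]
    show F x n - U n = F x n - t
    rw [hUn]
  rw [this] at step
  calc |F x n - t| ≤ ‖F x - F U‖ := step
    _ ≤ ‖x - U‖ := hne x hx U hUBc
    _ ≤ r := key

theorem level_preservation (F : Linf → Linf) (hbij : Set.BijOn F Bc Bc)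
    (hne : ∀ a ∈ Bc, ∀ b ∈ Bc, ‖F a - F b‖ ≤ ‖a - b‖)
    (hfix : ∀ x ∈ Bc, {i : ℕ | x i ≠ 1 ∧ x i ≠ -1}.Finite → F x = x)
    (hcon : ∀ x ∈ Bc, ∀ n : ℕ,
      (x n < 0 → F x n ∈ Set.Icc (x n) 0) ∧
      (0 < x n → F x n ∈ Set.Icc 0 (x n)) ∧
      (x n = 0 → F x n = 0)) :
    ∀ x ∈ Bc, ∀ h : ℝ, Tendsto (fun k => x k) atTop (𝓝 h) → ∀ n : ℕ,
      (|x n| < |h| → F x n = x n) ∧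
      (|h| ≤ x n → F x n ∈ Set.Icc |h| (x n)) ∧
      (x n ≤ -|h| → F x n ∈ Set.Icc (x n) (-|h|)) := by
  intro x hx h hlim n
  obtain ⟨hneg, hpos, hzero⟩ := hcon x hx n
  have hxi : ∀ i, |x i| ≤ 1 := fun i =>
    (lp.norm_apply_le_norm (by norm_num) x i).trans hx.1
  have habs : |h| ≤ 1 := by
    have := le_of_tendsto' hlim.abs (fun i => hxi i); simpa using this
  refine ⟨?_, ?_, ?_⟩
  · -- claim 1
    intro hlt
    have hh : h ≠ 0 := by
      intro h0; rw [h0] at hlt; simp at hlt; linarith [abs_nonneg (x n)]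
    rcases lt_trichotomy (x n) 0 with h0 | h0 | h0
    · have hF := hneg h0
      have h1 : |x n - (-1)| = 1 + x n := by
        rw [abs_of_nonneg (by have := hxi n; rw [abs_le] at this; linarith)]; ring
      have := auxA F hne hfix x hx h hlim hh n (-1) (Or.inr rfl) (1 + x n)
        (le_of_eq h1) (by rw [abs_of_neg h0] at hlt; linarith)
      have h2 : |F x n - (-1)| = 1 + F x n := by
        rw [abs_of_nonneg (by have := hF.1; have := hxi n; rw [abs_le] at this; linarith)]
        ring
      rw [h2] at this
      linarith [hF.1]
    · rw [hzero h0, h0]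
    · have hF := hpos h0
      have h1 : |x n - 1| = 1 - x n := by
        rw [abs_of_nonpos (by have := hxi n; rw [abs_le] at this; linarith)]; ring
      have := auxA F hne hfix x hx h hlim hh n 1 (Or.inl rfl) (1 - x n)
        (le_of_eq h1) (by rw [abs_of_pos h0] at hlt; linarith)
      have h2 : |F x n - 1| = 1 - F x n := by
        rw [abs_of_nonpos (by have := hF.2; have := hxi n; rw [abs_le] at this; linarith)]
        ring
      rw [h2] at this
      linarith [hF.2]
  · -- claim 2
    intro hge
    rcases eq_or_ne h 0 with rfl | hh
    · simp only [abs_zero] at hge ⊢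
      rcases eq_or_lt_of_le hge with h0 | h0
      · rw [hzero h0.symm]; exact ⟨le_refl 0, by rw [← h0]⟩
      · exact hpos h0
    · have hh0 : 0 < |h| := abs_pos.2 hh
      have h0 : 0 < x n := lt_of_lt_of_le hh0 hge
      have hF := hpos h0
      refine ⟨?_, hF.2⟩
      -- show |h| ≤ F x n via ε argument
      have keyε : ∀ ε > 0, |h| ≤ F x n + ε := by
        intro ε hε
        have h1 : |x n - 1| ≤ 1 - |h| + ε := by
          rw [abs_of_nonpos (by have := hxi n; rw [abs_le] at this; linarith)]
          linarith
        have := auxA F hne hfix x hx h hlim hh n 1 (Or.inl rfl) (1 - |h| + ε)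
          h1 (by linarith)
        have h2 : |F x n - 1| = 1 - F x n := by
          rw [abs_of_nonpos (by have := hF.2; have := hxi n; rw [abs_le] at this; linarith)]
          ring
        rw [h2] at this
        linarith
      exact le_of_forall_pos_le_add keyε
  · -- claim 3
    intro hle
    rcases eq_or_ne h 0 with rfl | hh
    · simp only [abs_zero, neg_zero] at hle ⊢
      rcases eq_or_lt_of_le hle with h0 | h0
      · rw [hzero h0]; exact ⟨le_of_eq h0, le_refl 0⟩
      · exact hneg h0
    · have hh0 : 0 < |h| := abs_pos.2 hh
      have h0 : x n < 0 := lt_of_le_of_lt hle (by linarith)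
      have hF := hneg h0
      refine ⟨hF.1, ?_⟩
      have keyε : ∀ ε > 0, F x n ≤ -|h| + ε := by
        intro ε hε
        have h1 : |x n - (-1)| ≤ 1 - |h| + ε := by
          rw [abs_of_nonneg (by have := hxi n; rw [abs_le] at this; linarith)]
          linarith
        have := auxA F hne hfix x hx h hlim hh n (-1) (Or.inr rfl) (1 - |h| + ε)
          h1 (by linarith)
        have h2 : |F x n - (-1)| = 1 + F x n := by
          rw [abs_of_nonneg (by have := hF.1; have := hxi n; rw [abs_le] at this; linarith)]
          ring
        rw [h2] at this
        linarith
      exact le_of_forall_pos_le_add keyε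
end
end

section
/- Let F̃ : B → B be a non-expansive bijection of the unit ball of c satisfying, for every x ∈ B with h = lim x_k and every n: |x_n| < |h| ⇒ F̃(x)_n = x_n; x_n ≥ |h| ⇒ F̃(x)_n ∈ [|h|, x_n]; x_n ≤ −|h| ⇒ F̃(x)_n ∈ [x_n, −|h|]. Then F̃ preserves limits: lim F̃(x)_k = lim x_k for every x ∈ B. -/
open Filter Topology Metric Set ENNReal

noncomputable section

theorem limit_preserved (F : Linf → Linf) (hbij : Set.BijOn F Bc Bc)
    (hne : ∀ a ∈ Bc, ∀ b ∈ Bc, ‖F a - F b‖ ≤ ‖a - b‖)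
    (hlev : ∀ x ∈ Bc, ∀ h : ℝ, Tendsto (fun k => x k) atTop (𝓝 h) → ∀ n : ℕ,
      (|x n| < |h| → F x n = x n) ∧
      (|h| ≤ x n → F x n ∈ Set.Icc |h| (x n)) ∧
      (x n ≤ -|h| → F x n ∈ Set.Icc (x n) (-|h|))) :
    ∀ x ∈ Bc, ∀ h : ℝ, Tendsto (fun k => x k) atTop (𝓝 h) →
      Tendsto (fun k => F x k) atTop (𝓝 h) := by
  intro x hx h hxh
  have habs : Tendsto (fun n => |x n - h|) atTop (𝓝 0) := by
    have h1 := (hxh.sub_const h).abs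
    simpa using h1
  have key : ∀ᶠ n in atTop, |F x n - h| ≤ |x n - h| := by
    have hev : ∀ᶠ n in atTop, h = 0 ∨ |x n - h| < |h| := by
      rcases eq_or_ne h 0 with h0 | h0
      · exact Eventually.of_forall fun n => Or.inl h0
      · exact (habs.eventually_lt_const (abs_pos.mpr h0)).mono fun n hn => Or.inr hn
    refine hev.mono fun n hn => ?_
    obtain ⟨h1, h2, h3⟩ := hlev x hx h hxh n
    rcases lt_or_ge (|x n|) (|h|) with hc | hc
    · rw [h1 hc]
    · rcases le_abs.mp hc with hc1 | hc2
      · obtain ⟨ha, hb⟩ := h2 hc1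
        have hh : 0 ≤ h := by
          rcases hn with h0 | hn
          · simp [h0]
          · by_contra hneg
            push_neg at hneg
            rw [abs_of_neg hneg] at hc1 hn
            rw [abs_of_nonneg (by linarith : (0:ℝ) ≤ x n - h)] at hn
            linarith
        rw [abs_of_nonneg hh] at ha
        rw [abs_of_nonneg (by linarith : (0:ℝ) ≤ F x n - h),
            abs_of_nonneg (by linarith : (0:ℝ) ≤ x n - h)]
        linarith
      · have hc1 : x n ≤ -|h| := by linarith
        obtain ⟨ha, hb⟩ := h3 hc1
        have hh : h ≤ 0 := by
          rcases hn with h0 | hn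
          · simp [h0]
          · by_contra hpos
            push_neg at hpos
            rw [abs_of_pos hpos] at hc1 hn
            rw [abs_of_nonpos (by linarith : x n - h ≤ 0)] at hn
            linarith
        rw [abs_of_nonpos hh] at hb
        rw [abs_of_nonpos (by linarith : F x n - h ≤ 0),
            abs_of_nonpos (by linarith : x n - h ≤ 0)]
        linarith
  have hfin : Tendsto (fun n => |F x n - h|) atTop (𝓝 0) :=
    squeeze_zero' (Eventually.of_forall fun n => abs_nonneg _) key habs
  rw [tendsto_iff_dist_tendsto_zero]
  simpa [Real.dist_eq] using hfin
end
end

section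
/- The isometric automorphisms of c₀ (surjective linear isometries of c₀ onto itself) are exactly the maps A with A(x)_{σ(n)} = α_n x_n, where σ : ℕ → ℕ is a bijection and α_n ∈ {−1, 1} for all n. -/
open Filter Topology Metric Set ENNReal

noncomputable section

/-- The space `c₀` of null sequences, as a submodule of `ℓ∞`. -/
def c0 : Submodule ℝ Linf where
  carrier := {x | Tendsto (fun n => x n) atTop (𝓝 (0:ℝ))}
  add_mem' := by
    intro a b ha hb
    have : Tendsto (fun n => a n + b n) atTop (𝓝 (0+0 : ℝ)) := ha.add hb
    simpa using this
  zero_mem' := by simp [tendsto_const_nhds]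
  smul_mem' := by
    intro r x hx
    have : Tendsto (fun n => r * x n) atTop (𝓝 (r * 0 : ℝ)) := hx.const_mul r
    simpa using this

lemma mem_c0 {x : Linf} : x ∈ c0 ↔ Tendsto (fun n => x n) atTop (𝓝 (0:ℝ)) := Iff.rfl

lemma abs_coord_le (x : Linf) (k : ℕ) : |x k| ≤ ‖x‖ :=
  lp.norm_apply_le_norm ENNReal.top_ne_zero x k

lemma norm_le_of_coords_s18 {x : Linf} {C : ℝ} (hC : 0 ≤ C) (h : ∀ k, |x k| ≤ C) : ‖x‖ ≤ C :=
  lp.norm_le_of_forall_le hC h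

def ev (k : ℕ) : Linf →ₗ[ℝ] ℝ where
  toFun f := f k
  map_add' f g := by simp [lp.coeFn_add]
  map_smul' c f := by simp [lp.coeFn_smul]

lemma c0_coe_norm (x : c0) : ‖x‖ = ‖(x : Linf)‖ := rfl

-- basis vectors
def en (n : ℕ) : c0 :=
  ⟨lp.single ∞ n (1:ℝ), by
    rw [mem_c0]
    have : ∀ᶠ k in atTop, (lp.single ∞ n (1:ℝ) : Linf) k = 0 := by
      filter_upwards [eventually_gt_atTop n] with k hk
      exact lp.single_apply_ne ∞ n 1 (by omega)
    exact Tendsto.congr' (by filter_upwards [this] with k hk using hk.symm) tendsto_const_nhds⟩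

lemma en_apply (n k : ℕ) : (en n : Linf) k = if k = n then 1 else 0 := by
  by_cases h : k = n
  · subst h; simp [en, lp.single_apply_self]
  · simp [en, lp.single_apply_ne ∞ n 1 h, h]

lemma norm_en (n : ℕ) : ‖en n‖ = 1 := by
  rw [c0_coe_norm]
  refine le_antisymm (norm_le_of_coords_s18 zero_le_one fun k => ?_) ?_
  · rw [en_apply]; split <;> simp
  · calc (1:ℝ) = |(en n : Linf) n| := by simp [en_apply]
    _ ≤ ‖(en n : Linf)‖ := abs_coord_le _ _

lemma abs_add_abs_le_max (a b : ℝ) : |a| + |b| ≤ max |a+b| |a-b| := by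
  rcases abs_cases a with ⟨ha, ha'⟩ | ⟨ha, ha'⟩ <;> rcases abs_cases b with ⟨hb, hb'⟩ | ⟨hb, hb'⟩
  · apply le_max_of_le_left; rw [ha, hb, abs_of_nonneg (show (0:ℝ) ≤ a + b by linarith)]
  · apply le_max_of_le_right; rw [ha, hb, abs_of_nonneg (show (0:ℝ) ≤ a - b by linarith)]; linarith
  · apply le_max_of_le_right; rw [ha, hb, abs_of_nonpos (show a - b ≤ (0:ℝ) by linarith)]; linarith
  · apply le_max_of_le_left; rw [ha, hb, abs_of_nonpos (show a + b ≤ (0:ℝ) by linarith)]; linarith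

-- peak existence
lemma exists_peak (x : c0) : ∃ k, ∀ j, |(x : Linf) j| ≤ |(x : Linf) k| := by
  by_cases h0 : ∀ j, (x : Linf) j = 0
  · exact ⟨0, fun j => by simp [h0]⟩
  push_neg at h0
  obtain ⟨j₀, hj₀⟩ := h0
  have hx : Tendsto (fun n => (x : Linf) n) atTop (𝓝 0) := x.2
  have hev : ∀ᶠ j in atTop, |(x : Linf) j| < |(x : Linf) j₀| := by
    have h1 := hx.abs
    rw [abs_zero] at h1
    exact h1.eventually_lt_const (abs_pos.mpr hj₀)
  obtain ⟨N, hN⟩ := eventually_atTop.mp hev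
  have hj₀N : j₀ < N := by
    by_contra h
    exact absurd (hN j₀ (by omega)) (lt_irrefl _)
  obtain ⟨k, hk, hkmax⟩ := (Finset.range N).exists_max_image (fun j => |(x : Linf) j|)
    ⟨j₀, Finset.mem_range.mpr hj₀N⟩
  refine ⟨k, fun j => ?_⟩
  by_cases hj : j < N
  · exact hkmax j (Finset.mem_range.mpr hj)
  · exact le_trans (hN j (by omega)).le (hkmax j₀ (Finset.mem_range.mpr hj₀N))

lemma key_pair {u v : Linf} (hs : ‖u + v‖ ≤ 1) (hd : ‖u - v‖ ≤ 1) (k : ℕ) :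
    |u k| + |v k| ≤ 1 := by
  have h1 : |(u + v) k| ≤ 1 := (abs_coord_le _ k).trans hs
  have h2 : |(u - v) k| ≤ 1 := (abs_coord_le _ k).trans hd
  have h3 : (u + v) k = u k + v k := by simp [lp.coeFn_add]
  have h4 : (u - v) k = u k - v k := by simp [lp.coeFn_sub]
  rw [h3] at h1; rw [h4] at h2
  exact (abs_add_abs_le_max _ _).trans (max_le h1 h2)

def evc (k : ℕ) : c0 →ₗ[ℝ] ℝ := (ev k).comp c0.subtype

lemma evc_apply (k : ℕ) (x : c0) : evc k x = (x : Linf) k := rfl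

lemma norm_en_add (n m : ℕ) (h : n ≠ m) (s : ℝ) (hs : s = 1 ∨ s = -1) :
    ‖en n + s • en m‖ ≤ 1 := by
  rw [c0_coe_norm]
  refine norm_le_of_coords_s18 zero_le_one fun k => ?_
  have : ((en n + s • en m : c0) : Linf) k = (en n : Linf) k + s * (en m : Linf) k := by
    push_cast
    simp [lp.coeFn_add, lp.coeFn_smul]
    rfl
  rw [this, en_apply, en_apply]
  rcases hs with hs | hs <;> subst hs <;> split_ifs with h1 h2 h2 <;> simp_all <;> norm_num

set_option synthInstance.maxHeartbeats 1000000 in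
set_option maxHeartbeats 1600000 in
lemma forward (A : c0 ≃ₗᵢ[ℝ] c0) :
    ∃ σ : ℕ ≃ ℕ, ∃ α : ℕ → ℝ, (∀ n, α n = 1 ∨ α n = -1) ∧
      ∀ x : c0, ∀ n : ℕ, (A x : Linf) (σ n) = α n * (x : Linf) n := by
  set u : ℕ → c0 := fun n => A (en n) with hu
  have hnorm : ∀ n, ‖(u n : Linf)‖ = 1 := fun n => by
    rw [← c0_coe_norm]
    show ‖A (en n)‖ = 1
    rw [A.norm_map, norm_en]
  choose σ₀ hσ₀ using fun n => exists_peak (u n)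
  have hpeak : ∀ n, |(u n : Linf) (σ₀ n)| = 1 := by
    intro n
    refine le_antisymm ((abs_coord_le _ _).trans (hnorm n).le) ?_
    rw [← hnorm n]
    exact norm_le_of_coords_s18 (abs_nonneg _) (hσ₀ n)
  have hdisj : ∀ m n, m ≠ n → (u m : Linf) (σ₀ n) = 0 := by
    intro m n hmn
    have h1 : ‖(u n : Linf) + (u m : Linf)‖ ≤ 1 := by
      have : ((u n + u m : c0) : Linf) = (u n : Linf) + (u m : Linf) := rfl
      rw [← this, ← c0_coe_norm]
      have heq : u n + u m = A (en n + (1:ℝ) • en m) := by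
        rw [map_add, map_smul, one_smul]
      rw [heq, A.norm_map]
      exact norm_en_add n m (by omega) 1 (Or.inl rfl)
    have h2 : ‖(u n : Linf) - (u m : Linf)‖ ≤ 1 := by
      have : ((u n - u m : c0) : Linf) = (u n : Linf) - (u m : Linf) := rfl
      rw [← this, ← c0_coe_norm]
      have heq : u n - u m = A (en n + (-1:ℝ) • en m) := by
        rw [map_add, map_smul, neg_one_smul, ← sub_eq_add_neg]
      rw [heq, A.norm_map]
      exact norm_en_add n m (by omega) (-1) (Or.inr rfl)
    have := key_pair h1 h2 (σ₀ n)
    rw [hpeak n] at this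
    have : |(u m : Linf) (σ₀ n)| ≤ 0 := by linarith
    have := le_antisymm this (abs_nonneg _)
    exact abs_eq_zero.mp this
  set α : ℕ → ℝ := fun n => (u n : Linf) (σ₀ n) with hα
  have hαabs : ∀ n, |α n| = 1 := hpeak
  have main : ∀ (x : c0) (n : ℕ), (A x : Linf) (σ₀ n) = α n * (x : Linf) n := by
    intro x n
    have key : ∀ ε : ℝ, 0 < ε → |(A x : Linf) (σ₀ n) - α n * (x : Linf) n| ≤ ε := by
      intro ε hε
      have hx : Tendsto (fun j => |(x : Linf) j|) atTop (𝓝 0) := by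
        have := (mem_c0.mp x.2).abs
        simpa using this
      obtain ⟨N₀, hN₀⟩ := eventually_atTop.mp (hx.eventually_lt_const hε)
      set N := max N₀ (n + 1) with hN
      set s : c0 := ∑ m ∈ Finset.range N, (x : Linf) m • en m with hsdef
      have coord_s : ∀ k, (s : Linf) k = if k < N then (x : Linf) k else 0 := by
        intro k
        have : (s : Linf) k = evc k s := rfl
        rw [this, hsdef, map_sum]
        have : ∀ m ∈ Finset.range N, evc k ((x : Linf) m • en m)
            = if k = m then (x : Linf) m else 0 := by
          intro m _
          rw [map_smul, smul_eq_mul, evc_apply, en_apply]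
          split <;> simp
        rw [Finset.sum_congr rfl this, Finset.sum_ite_eq (Finset.range N) k]
        simp [Finset.mem_range]
      have hxs : ‖x - s‖ ≤ ε := by
        rw [c0_coe_norm]
        refine norm_le_of_coords_s18 hε.le fun k => ?_
        have : ((x - s : c0) : Linf) k = (x : Linf) k - (s : Linf) k := rfl
        rw [this, coord_s k]
        split_ifs with h
        · simp [hε.le]
        · simpa using (hN₀ k (by omega)).le
      have hAs : (A s : Linf) (σ₀ n) = α n * (x : Linf) n := by
        have h1 : A s = ∑ m ∈ Finset.range N, (x : Linf) m • u m := by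
          rw [hsdef, map_sum]
          exact Finset.sum_congr rfl fun m _ => by rw [map_smul]
        have h2 : (A s : Linf) (σ₀ n) = evc (σ₀ n) (A s) := rfl
        rw [h2, h1, map_sum]
        rw [Finset.sum_eq_single n]
        · rw [map_smul, smul_eq_mul, evc_apply]
          ring
        · intro m _ hm
          rw [map_smul, smul_eq_mul, evc_apply, hdisj m n hm, mul_zero]
        · intro hn
          exact absurd (Finset.mem_range.mpr (by omega)) hn
      have hrem : |(A (x - s) : Linf) (σ₀ n)| ≤ ε := by
        refine (abs_coord_le _ _).trans ?_
        rw [← c0_coe_norm, A.norm_map]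
        exact hxs
      have hsplit : (A x : Linf) (σ₀ n)
          = (A s : Linf) (σ₀ n) + (A (x - s) : Linf) (σ₀ n) := by
        have : A x = A s + A (x - s) := by
          rw [← map_add]
          congr 1
          abel
        rw [this]
        rfl
      rw [hsplit, hAs]
      simpa using hrem
    by_contra hne
    have hpos : 0 < |(A x : Linf) (σ₀ n) - α n * (x : Linf) n| := by
      rw [abs_pos, sub_ne_zero]
      exact hne
    have := key _ (half_pos hpos)
    linarith [abs_nonneg ((A x : Linf) (σ₀ n) - α n * (x : Linf) n)]
  have hinj : Function.Injective σ₀ := by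
    intro m n hmn
    by_contra h
    have h0 := hdisj m n h
    have h1 := hpeak m
    rw [hmn, h0] at h1
    norm_num at h1
  have hsurj : Function.Surjective σ₀ := by
    intro j
    set x : c0 := A.symm (en j) with hx
    have hAx : A x = en j := by simp [hx]
    have hxne : x ≠ 0 := by
      intro h0
      rw [h0] at hAx
      have : (en j : Linf) j = ((A 0 : c0) : Linf) j := by rw [hAx]
      rw [en_apply] at this
      simp at this
    have : ∃ n, (x : Linf) n ≠ 0 := by
      by_contra h
      push_neg at h
      exact hxne (Subtype.ext (lp.ext (funext h)))
    obtain ⟨n, hn⟩ := this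
    refine ⟨n, ?_⟩
    have := main x n
    rw [hAx, en_apply] at this
    by_contra hj
    rw [if_neg hj] at this
    have hα0 : α n ≠ 0 := by
      intro h
      have := hαabs n
      rw [h] at this
      norm_num at this
    exact hn (by
      rcases mul_eq_zero.mp this.symm with h | h
      · exact absurd h hα0
      · exact h)
  refine ⟨Equiv.ofBijective σ₀ ⟨hinj, hsurj⟩, α, fun n => ?_, fun x n => main x n⟩
  rcases (abs_eq (zero_le_one)).mp (hαabs n) with h | h
  · exact Or.inl h
  · exact Or.inr h

lemma sq_one {a : ℝ} (h : |a| = 1) : a * a = 1 := by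
  rw [← abs_mul_abs_self, h, one_mul]

lemma pm_memlp (σ : ℕ ≃ ℕ) (α : ℕ → ℝ) (hα : ∀ n, |α n| = 1) (x : Linf) :
    Memℓp (fun k => α (σ.symm k) * x (σ.symm k)) ∞ := by
  apply memℓp_infty
  refine ⟨‖x‖, ?_⟩
  rintro r ⟨k, rfl⟩
  simp only [Real.norm_eq_abs, abs_mul, hα, one_mul]
  exact abs_coord_le x _

def pmL (σ : ℕ ≃ ℕ) (α : ℕ → ℝ) (hα : ∀ n, |α n| = 1) (x : Linf) : Linf :=
  ⟨fun k => α (σ.symm k) * x (σ.symm k), pm_memlp σ α hα x⟩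

lemma pmL_apply (σ : ℕ ≃ ℕ) (α : ℕ → ℝ) (hα : ∀ n, |α n| = 1) (x : Linf) (k : ℕ) :
    pmL σ α hα x k = α (σ.symm k) * x (σ.symm k) := rfl

lemma pmL_mem_c0 (σ : ℕ ≃ ℕ) (α : ℕ → ℝ) (hα : ∀ n, |α n| = 1) (x : c0) :
    pmL σ α hα (x : Linf) ∈ c0 := by
  rw [mem_c0]
  have h1 : Tendsto (fun k => (x : Linf) (σ.symm k)) atTop (𝓝 0) :=
    (mem_c0.mp x.2).comp σ.symm.injective.nat_tendsto_atTop
  refine squeeze_zero_norm (a := fun k => |(x : Linf) (σ.symm k)|) (fun k => ?_)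
    (by simpa using h1.abs)
  rw [pmL_apply, Real.norm_eq_abs, abs_mul, hα, one_mul]

def pmc (σ : ℕ ≃ ℕ) (α : ℕ → ℝ) (hα : ∀ n, |α n| = 1) : c0 →ₗ[ℝ] c0 where
  toFun x := ⟨pmL σ α hα (x : Linf), pmL_mem_c0 σ α hα x⟩
  map_add' x y := by
    refine Subtype.ext (lp.ext (funext fun k => ?_))
    show α (σ.symm k) * ((x : Linf) (σ.symm k) + (y : Linf) (σ.symm k))
      = α (σ.symm k) * (x : Linf) (σ.symm k) + α (σ.symm k) * (y : Linf) (σ.symm k)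
    ring
  map_smul' c x := by
    refine Subtype.ext (lp.ext (funext fun k => ?_))
    show α (σ.symm k) * (c * (x : Linf) (σ.symm k)) = c * (α (σ.symm k) * (x : Linf) (σ.symm k))
    ring

lemma pmc_apply (σ : ℕ ≃ ℕ) (α : ℕ → ℝ) (hα : ∀ n, |α n| = 1) (x : c0) (k : ℕ) :
    ((pmc σ α hα x : c0) : Linf) k = α (σ.symm k) * (x : Linf) (σ.symm k) := rfl

lemma pmc_norm (σ : ℕ ≃ ℕ) (α : ℕ → ℝ) (hα : ∀ n, |α n| = 1) (x : c0) :
    ‖pmc σ α hα x‖ = ‖x‖ := by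
  rw [c0_coe_norm, c0_coe_norm]
  apply le_antisymm
  · refine norm_le_of_coords_s18 (norm_nonneg _) fun k => ?_
    rw [pmc_apply, abs_mul, hα, one_mul]
    exact abs_coord_le _ _
  · refine norm_le_of_coords_s18 (norm_nonneg _) fun j => ?_
    have : |(x : Linf) j| = |((pmc σ α hα x : c0) : Linf) (σ j)| := by
      rw [pmc_apply, Equiv.symm_apply_apply, abs_mul, hα, one_mul]
    rw [this]
    exact abs_coord_le _ _

def pmE (σ : ℕ ≃ ℕ) (α : ℕ → ℝ) (hα : ∀ n, |α n| = 1) : c0 ≃ₗᵢ[ℝ] c0 where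
  toLinearEquiv := LinearEquiv.ofLinear (pmc σ α hα)
    (pmc σ.symm (fun k => α (σ.symm k)) (fun k => hα _))
    (by
      refine LinearMap.ext fun y => Subtype.ext (lp.ext (funext fun k => ?_))
      show α (σ.symm k) * ((α (σ.symm (σ.symm.symm (σ.symm k))))
        * (y : Linf) (σ.symm.symm (σ.symm k))) = (y : Linf) k
      simp only [Equiv.symm_symm, Equiv.apply_symm_apply]
      rw [← mul_assoc, sq_one (hα _), one_mul])
    (by
      refine LinearMap.ext fun y => Subtype.ext (lp.ext (funext fun k => ?_))
      show α (σ.symm (σ.symm.symm k)) * (α (σ.symm (σ.symm.symm k))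
        * (y : Linf) (σ.symm (σ.symm.symm k))) = (y : Linf) k
      simp only [Equiv.symm_symm, Equiv.symm_apply_apply]
      rw [← mul_assoc, sq_one (hα _), one_mul])
  norm_map' := pmc_norm σ α hα

theorem c0_isometric_automorphisms :
    (∀ A : c0 ≃ₗᵢ[ℝ] c0,
      ∃ σ : ℕ ≃ ℕ, ∃ α : ℕ → ℝ, (∀ n, α n = 1 ∨ α n = -1) ∧
        ∀ x : c0, ∀ n : ℕ, (A x : Linf) (σ n) = α n * (x : Linf) n) ∧
    (∀ (σ : ℕ ≃ ℕ) (α : ℕ → ℝ), (∀ n, α n = 1 ∨ α n = -1) →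
      ∃ A : c0 ≃ₗᵢ[ℝ] c0,
        ∀ x : c0, ∀ n : ℕ, (A x : Linf) (σ n) = α n * (x : Linf) n) := by
  constructor
  · exact forward
  · intro σ α hα
    have hα' : ∀ n, |α n| = 1 := fun n => by rcases hα n with h | h <;> rw [h] <;> norm_num
    refine ⟨pmE σ α hα', fun x n => ?_⟩
    show α (σ.symm (σ n)) * (x : Linf) (σ.symm (σ n)) = α n * (x : Linf) n
    rw [Equiv.symm_apply_apply]
end
end
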